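/- arXiv:2004.06506 — 13 statements merged into one kernel-verified Lean document; each statement's English description precedes it below -/
import Mathlib

section
/- Let d ≥ 2 be an integer and let (h; m_1, …, m_l) be a Fuchsian signature with 3h - 3 + l = d, each m_i ≥ 2, and hyperbolic area μ = 2π(2h - 2 + Σ(1 - 1/m_i)) > 0. If μ = 2π(d-1)/2 (i.e., the minimum possible), then h = 0, l = d + 3, and m_i = 2 for all i. -/
/-! Each elliptic term `1 - 1/mᵢ` is at least `1/2`, with equality exactly when `mᵢ = 2`.
Substituting `l = d + 3 - 3h` from the dimension count, the area is therefore at least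
`2π((d - 1)/2 + h/2)`, so the minimal area forces `h = 0` and every period to be `2`. -/

open Finset

lemma sum_const_half {α : Type*} (s : Finset α) : ∑ _i ∈ s, (1 / 2 : ℝ) = (s.card : ℝ) / 2 := by
  rw [sum_const, nsmul_eq_mul]; ring

lemma half_le_one_sub_one_div {n : ℕ} (hn : 2 ≤ n) : (1 / 2 : ℝ) ≤ 1 - 1 / (n : ℝ) := by
  have : (1 : ℝ) / n ≤ 1 / 2 := one_div_le_one_div_of_le two_pos (by exact_mod_cast hn)
  linarith

lemma one_sub_one_div_eq_half_iff {n : ℕ} : 1 - 1 / (n : ℝ) = 1 / 2 ↔ n = 2 := by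
  constructor
  · intro h
    have : (1 : ℝ) / n = 1 / 2 := by linarith
    rw [one_div, one_div, inv_inj] at this
    exact_mod_cast this
  · rintro rfl
    norm_num

section EllipticTerms

variable {ι : Type*} [Fintype ι] {m : ι → ℕ}

lemma card_div_two_le_sum_one_sub_one_div (hm : ∀ i, 2 ≤ m i) :
    (Fintype.card ι : ℝ) / 2 ≤ ∑ i, (1 - 1 / (m i : ℝ)) := by
  calc (Fintype.card ι : ℝ) / 2 = ∑ _i : ι, (1 / 2 : ℝ) := (sum_const_half univ).symm
    _ ≤ ∑ i, (1 - 1 / (m i : ℝ)) := sum_le_sum fun i _ => half_le_one_sub_one_div (hm i)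

lemma sum_one_sub_one_div_eq_card_div_two_iff (hm : ∀ i, 2 ≤ m i) :
    ∑ i, (1 - 1 / (m i : ℝ)) = (Fintype.card ι : ℝ) / 2 ↔ ∀ i, m i = 2 := by
  rw [← card_univ, ← sum_const_half, eq_comm,
    sum_eq_sum_iff_of_le fun i _ => half_le_one_sub_one_div (hm i)]
  simp only [mem_univ, true_implies, eq_comm (a := (1 / 2 : ℝ)), one_sub_one_div_eq_half_iff]

end EllipticTerms

theorem fuchsian_area_equality_case_general (d h l : ℕ) (m : Fin l → ℕ)
    (hm : ∀ i, 2 ≤ m i)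
    (hdim : 3 * (h : ℤ) - 3 + l = d)
    (heq : 2 * Real.pi * (2 * (h : ℝ) - 2 + ∑ i, (1 - 1 / (m i : ℝ)))
      = 2 * Real.pi * ((d : ℝ) - 1) / 2) :
    h = 0 ∧ l = d + 3 ∧ ∀ i, m i = 2 := by
  have harea : 2 * (h : ℝ) - 2 + ∑ i, (1 - 1 / (m i : ℝ)) = ((d : ℝ) - 1) / 2 :=
    mul_left_cancel₀ (by positivity : (2 : ℝ) * Real.pi ≠ 0) (heq.trans (by ring))
  have hl : (l : ℝ) = d + 3 - 3 * h := by
    have := congrArg (Int.cast : ℤ → ℝ) hdim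
    push_cast at this
    linarith
  have hsum := card_div_two_le_sum_one_sub_one_div hm
  rw [Fintype.card_fin] at hsum
  have hh : h = 0 := by
    have : (h : ℝ) ≤ 0 := by linarith
    exact_mod_cast le_antisymm this h.cast_nonneg
  refine ⟨hh, by omega, (sum_one_sub_one_div_eq_card_div_two_iff hm).mp ?_⟩
  subst hh
  rw [Fintype.card_fin]
  push_cast at hl harea
  linarith

/-- If a Fuchsian signature of Teichmüller dimension d ≥ 2 with positive
hyperbolic area attains the minimal area 2π(d-1)/2, then h = 0, l = d + 3 and all
periods equal 2. -/
theorem fuchsian_area_equality_case (d h l : ℕ) (m : Fin l → ℕ)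
    (hd : 2 ≤ d) (hm : ∀ i, 2 ≤ m i)
    (hdim : 3 * (h : ℤ) - 3 + l = d)
    (hpos : 0 < 2 * Real.pi * (2 * (h : ℝ) - 2 + ∑ i, (1 - 1 / (m i : ℝ))))
    (heq : 2 * Real.pi * (2 * (h : ℝ) - 2 + ∑ i, (1 - 1 / (m i : ℝ)))
      = 2 * Real.pi * ((d : ℝ) - 1) / 2) :
    h = 0 ∧ l = d + 3 ∧ ∀ i, m i = 2 :=
  fuchsian_area_equality_case_general d h l m hm hdim heq
end

section
/- Suppose a finite group G of order N acts on a compact Riemann surface of genus g ≥ 2 with signature (h; m_1, …, m_l) of Teichmüller dimension d = 3h - 3 + l ≥ 2, so that the Riemann–Hurwitz formula 2(g-1) = N·(2h - 2 + Σ_{i=1}^l (1 - 1/m_i)) holds. Then N ≤ 4(g-1)/(d-1). -/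
/-!
Bounding each period term `1 - 1/mᵢ` below by `1/2` gives
`2 (2h - 2 + Σ (1 - 1/mᵢ)) ≥ 4h - 4 + l ≥ 3h - 4 + l = d - 1`,
and multiplying by `N` turns the left side into `4(g - 1)` by Riemann–Hurwitz.
-/

open Finset

section LinearOrderedField

variable {K : Type*} [Field K] [LinearOrder K] [IsStrictOrderedRing K]

theorem half_le_one_sub_one_div_s2 {x : K} (hx : 2 ≤ x) : 1 / 2 ≤ 1 - 1 / x := by
  have : 1 / x ≤ 1 / 2 := one_div_le_one_div_of_le two_pos hx
  linarith

theorem card_div_two_le_sum_one_sub_one_div_s2 {ι : Type*} (s : Finset ι) {x : ι → K}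
    (hx : ∀ i ∈ s, 2 ≤ x i) : (#s : K) / 2 ≤ ∑ i ∈ s, (1 - 1 / x i) := by
  calc (#s : K) / 2 = ∑ _i ∈ s, (1 / 2 : K) := by rw [sum_const, nsmul_eq_mul]; ring
    _ ≤ ∑ i ∈ s, (1 - 1 / x i) := sum_le_sum fun i hi => half_le_one_sub_one_div_s2 (hx i hi)

/-- Minus the orbifold Euler characteristic of a quotient with signature `(h; m₁, …, mₗ)`. -/
def signatureArea (h : ℕ) {l : ℕ} (m : Fin l → ℕ) : K :=
  2 * h - 2 + ∑ i, (1 - 1 / (m i : K))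

theorem teichmullerDim_sub_one_le_two_mul_signatureArea (h : ℕ) {l : ℕ} (m : Fin l → ℕ)
    (hm : ∀ i, 2 ≤ m i) : (3 * h - 3 + l : K) - 1 ≤ 2 * signatureArea h m := by
  have hsum : (l : K) / 2 ≤ ∑ i, (1 - 1 / (m i : K)) := by
    simpa using card_div_two_le_sum_one_sub_one_div_s2 (univ : Finset (Fin l))
      (x := fun i => (m i : K)) fun i _ => by exact_mod_cast hm i
  have hh : (0 : K) ≤ h := Nat.cast_nonneg h
  unfold signatureArea
  linarith

end LinearOrderedField

theorem order_bound_dim_ge_two_general (N g d h l : ℕ) (m : Fin l → ℕ)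
    (hm : ∀ i, 2 ≤ m i)
    (hd : 2 ≤ d) (hdim : 3 * (h : ℤ) - 3 + l = d)
    (hRH : 2 * ((g : ℚ) - 1) = N * (2 * (h : ℚ) - 2 + ∑ i, (1 - 1 / (m i : ℚ)))) :
    (N : ℚ) ≤ 4 * ((g : ℚ) - 1) / ((d : ℚ) - 1) := by
  have hdimQ : (3 * h - 3 + l : ℚ) = d := by exact_mod_cast hdim
  have hd_sub_one_pos : (0 : ℚ) < d - 1 := by
    have : (2 : ℚ) ≤ d := by exact_mod_cast hd
    linarith
  rw [le_div_iff₀ hd_sub_one_pos]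
  calc (N : ℚ) * (d - 1) ≤ N * (2 * signatureArea h m) := by
        gcongr
        rw [← hdimQ]
        exact teichmullerDim_sub_one_le_two_mul_signatureArea h m hm
    _ = 4 * (g - 1) := by
        rw [signatureArea]
        linear_combination -2 * hRH

/-- If a group of order N acts on a genus-g surface (g ≥ 2) with signature
(h; m_1,…,m_l) of Teichmüller dimension d = 3h - 3 + l ≥ 2, with Riemann–Hurwitz
2(g-1) = N(2h - 2 + Σ(1 - 1/m_i)), then N ≤ 4(g-1)/(d-1). -/
theorem order_bound_dim_ge_two (N g d h l : ℕ) (m : Fin l → ℕ)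
    (hN : 1 ≤ N) (hg : 2 ≤ g) (hm : ∀ i, 2 ≤ m i)
    (hd : 2 ≤ d) (hdim : 3 * (h : ℤ) - 3 + l = d)
    (hRH : 2 * ((g : ℚ) - 1) = N * (2 * (h : ℚ) - 2 + ∑ i, (1 - 1 / (m i : ℚ)))) :
    (N : ℚ) ≤ 4 * ((g : ℚ) - 1) / ((d : ℚ) - 1) :=
  order_bound_dim_ge_two_general N g d h l m hm hd hdim hRH
end

section
/- Suppose the Riemann–Hurwitz equation 2(g-1) = N(2h - 2 + Σ_{i=1}^l (1 - 1/m_i)) holds with N a positive integer, g ≥ 2, h ≥ 0, m_i ≥ 2 integers, d := 3h - 3 + l ≥ 2, and N = 4(g-1)/(d-1). Then h = 0, l = d + 3, and every m_i = 2. -/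
/-! Comparing the Riemann–Hurwitz equation with `N (d - 1) = 4 (g - 1)` and eliminating `N` and `g`
gives `2 ∑ (1 - 1/mᵢ) = l - h`. Every period is at least `2`, so each summand is at least `1/2`
and the sum is at least `l/2`; hence `h = 0`, and equality in this bound forces every `mᵢ = 2`. -/

lemma half_le_one_sub_inv {m : ℕ} (hm : 2 ≤ m) : (1 : ℚ) / 2 ≤ 1 - 1 / (m : ℚ) := by
  have : 1 / (m : ℚ) ≤ 1 / 2 := one_div_le_one_div_of_le (by norm_num) (by exact_mod_cast hm)
  linarith

lemma one_sub_inv_eq_half_iff {m : ℕ} : 1 - 1 / (m : ℚ) = 1 / 2 ↔ m = 2 := by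
  constructor
  · intro h
    have : (m : ℚ)⁻¹ = ((2 : ℕ) : ℚ)⁻¹ := by rw [one_div] at h; push_cast; linarith
    exact_mod_cast inv_inj.mp this
  · rintro rfl
    norm_num

namespace Finset

variable {ι : Type*} {s : Finset ι} {m : ι → ℕ}

lemma card_div_two_le_sum_one_sub_inv (hm : ∀ i ∈ s, 2 ≤ m i) :
    (#s : ℚ) / 2 ≤ ∑ i ∈ s, (1 - 1 / (m i : ℚ)) :=
  calc (#s : ℚ) / 2 = ∑ _i ∈ s, (1 : ℚ) / 2 := by rw [sum_const, nsmul_eq_mul]; ring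
    _ ≤ _ := sum_le_sum fun i hi => half_le_one_sub_inv (hm i hi)

lemma eq_two_of_sum_one_sub_inv_eq_card_div_two (hm : ∀ i ∈ s, 2 ≤ m i)
    (hsum : ∑ i ∈ s, (1 - 1 / (m i : ℚ)) = #s / 2) : ∀ i ∈ s, m i = 2 := by
  have hexcess : ∑ i ∈ s, ((1 - 1 / (m i : ℚ)) - 1 / 2) = 0 := by
    rw [sum_sub_distrib, hsum, sum_const, nsmul_eq_mul]; ring
  rw [sum_eq_zero_iff_of_nonneg fun i hi => sub_nonneg.mpr (half_le_one_sub_inv (hm i hi))]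
    at hexcess
  exact fun i hi => one_sub_inv_eq_half_iff.mp (sub_eq_zero.mp (hexcess i hi))

end Finset

lemma two_mul_branch_sum_eq {N g h l d S : ℚ} (hN : N ≠ 0) (hd : d ≠ 1)
    (hdim : 3 * h - 3 + l = d) (hRH : 2 * (g - 1) = N * (2 * h - 2 + S))
    (heq : N = 4 * (g - 1) / (d - 1)) : 2 * S = l - h := by
  rw [eq_div_iff (sub_ne_zero.mpr hd)] at heq
  have : N * (d - 1) = N * (2 * (2 * h - 2 + S)) := by linarith
  linarith [mul_left_cancel₀ hN this]

theorem order_bound_equality_dim_ge_two_general (N g d h l : ℕ) (m : Fin l → ℕ)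
    (hN : 1 ≤ N) (hm : ∀ i, 2 ≤ m i)
    (hd : 2 ≤ d) (hdim : 3 * (h : ℤ) - 3 + l = d)
    (hRH : 2 * ((g : ℚ) - 1) = N * (2 * (h : ℚ) - 2 + ∑ i, (1 - 1 / (m i : ℚ))))
    (heq : (N : ℚ) = 4 * ((g : ℚ) - 1) / ((d : ℚ) - 1)) :
    h = 0 ∧ l = d + 3 ∧ ∀ i, m i = 2 := by
  have hm' : ∀ i ∈ Finset.univ, 2 ≤ m i := fun i _ => hm i
  have hsum : 2 * ∑ i, (1 - 1 / (m i : ℚ)) = l - h :=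
    two_mul_branch_sum_eq (by positivity) (by norm_cast; omega) (by exact_mod_cast hdim) hRH heq
  have hlow := Finset.card_div_two_le_sum_one_sub_inv hm'
  rw [Finset.card_univ, Fintype.card_fin] at hlow
  have hh : h = 0 := by
    have : (h : ℚ) ≤ 0 := by linarith
    exact_mod_cast this.antisymm h.cast_nonneg
  refine ⟨hh, by omega, fun i => ?_⟩
  subst hh
  refine Finset.eq_two_of_sum_one_sub_inv_eq_card_div_two hm' ?_ i (Finset.mem_univ i)
  rw [Finset.card_univ, Fintype.card_fin]
  linarith

/-- In the Riemann–Hurwitz setup with d = 3h - 3 + l ≥ 2, if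
N = 4(g-1)/(d-1) then h = 0, l = d + 3 and every period equals 2. -/
theorem order_bound_equality_dim_ge_two (N g d h l : ℕ) (m : Fin l → ℕ)
    (hN : 1 ≤ N) (hg : 2 ≤ g) (hm : ∀ i, 2 ≤ m i)
    (hd : 2 ≤ d) (hdim : 3 * (h : ℤ) - 3 + l = d)
    (hRH : 2 * ((g : ℚ) - 1) = N * (2 * (h : ℚ) - 2 + ∑ i, (1 - 1 / (m i : ℚ))))
    (heq : (N : ℚ) = 4 * ((g : ℚ) - 1) / ((d : ℚ) - 1)) :
    h = 0 ∧ l = d + 3 ∧ ∀ i, m i = 2 :=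
  order_bound_equality_dim_ge_two_general N g d h l m hN hm hd hdim hRH heq
end

section
/- Let (0; m_1, m_2, m_3, m_4) be a signature with each m_i ≥ 2, not all m_i equal to 2, such that for every prime p, the p-localization of the signature is non-degenerate (i.e., if the set of m_i divisible by p is nonempty, it has size at least 3, or size 2 with equal p-parts). Then the hyperbolic area μ = 2π(-2 + Σ_{i=1}^4 (1 - 1/m_i)) satisfies μ ≥ π/2, with equality exactly for the signature (0; 2,2,2,4) up to ordering. -/
/-!
With `s = ∑ 1 / mᵢ` the area is `2π(2 - s)`, so the claim is `s ≤ 7/4`, with equality only for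
`(2, 2, 2, 4)`. Some period `mⱼ` exceeds `2`. If `mⱼ = 3`, admissibility at `p = 3` forces a second
period divisible by `3`, and then `s ≤ 1/3 + 1/3 + 1/2 + 1/2 < 7/4`. Otherwise `mⱼ ≥ 4` and
`s ≤ 1/4 + 3/2`, with equality only when `mⱼ = 4` and the other three periods are `2`.
-/

open Finset

def IsNilpotentAdmissible {ι : Type*} [Fintype ι] (m : ι → ℕ) : Prop :=
  ∀ p : ℕ, p.Prime → (∃ i, p ∣ m i) →
    (3 ≤ (univ.filter fun i => p ∣ m i).card ∨
      ((univ.filter fun i => p ∣ m i).card = 2 ∧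
        ∀ i j, p ∣ m i → p ∣ m j → p ^ (m i).factorization p = p ^ (m j).factorization p))

theorem IsNilpotentAdmissible.exists_ne_dvd {ι : Type*} [Fintype ι] {m : ι → ℕ}
    (h : IsNilpotentAdmissible m) {p : ℕ} (hp : p.Prime) {j : ι} (hj : p ∣ m j) :
    ∃ k ≠ j, p ∣ m k := by
  have hcard : 1 < (univ.filter fun i => p ∣ m i).card := by
    rcases h p hp ⟨j, hj⟩ with h3 | ⟨h2, -⟩ <;> omega
  obtain ⟨k, hk, hkj⟩ := exists_mem_ne hcard j
  exact ⟨k, hkj, (mem_filter.1 hk).2⟩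

theorem inv_natCast_le_inv_natCast {n k : ℕ} (hk : 0 < k) (h : k ≤ n) :
    (n : ℝ)⁻¹ ≤ (k : ℝ)⁻¹ :=
  inv_anti₀ (mod_cast hk) (mod_cast h)

theorem sum_inv_le_sum_add_card_compl_div_two {ι : Type*} [Fintype ι] [DecidableEq ι]
    {m : ι → ℕ} (hm : ∀ i, 2 ≤ m i) (t : Finset ι) :
    ∑ i, (m i : ℝ)⁻¹ ≤ ∑ i ∈ t, (m i : ℝ)⁻¹ + (tᶜ.card : ℝ) / 2 := by
  have hcompl : ∑ i ∈ tᶜ, (m i : ℝ)⁻¹ ≤ tᶜ.card • (2 : ℝ)⁻¹ :=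
    sum_le_card_nsmul _ _ _ fun i _ => inv_natCast_le_inv_natCast two_pos (hm i)
  rw [← sum_add_sum_compl t]
  rw [nsmul_eq_mul] at hcompl
  linarith

section FourPeriods

variable {m : Fin 4 → ℕ}

theorem sum_inv_le_of_three_le (hm : ∀ i, 2 ≤ m i) {j k : Fin 4} (hjk : j ≠ k)
    (hj : 3 ≤ m j) (hk : 3 ≤ m k) : ∑ i, (m i : ℝ)⁻¹ ≤ 5 / 3 := by
  have hsum := sum_inv_le_sum_add_card_compl_div_two hm {j, k}
  rw [sum_pair hjk, card_compl, card_pair hjk] at hsum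
  have := inv_natCast_le_inv_natCast (by norm_num) hj
  have := inv_natCast_le_inv_natCast (by norm_num) hk
  norm_num at hsum
  linarith

theorem sum_inv_le_of_four_le (hm : ∀ i, 2 ≤ m i) {j : Fin 4} (hj : 4 ≤ m j) :
    ∑ i, (m i : ℝ)⁻¹ ≤ 7 / 4 ∧ (∑ i, (m i : ℝ)⁻¹ = 7 / 4 → m j = 4 ∧ ∀ i ≠ j, m i = 2) := by
  have hsum := sum_inv_le_sum_add_card_compl_div_two hm {j}
  rw [sum_singleton, card_compl, card_singleton] at hsum
  have hj' := inv_natCast_le_inv_natCast (by norm_num) hj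
  norm_num at hsum hj'
  refine ⟨by linarith, fun heq => ⟨?_, fun i hij => ?_⟩⟩
  · by_contra hne
    have := inv_natCast_le_inv_natCast (by norm_num) (show 5 ≤ m j by omega)
    norm_num at this
    linarith
  · by_contra hne
    have := sum_inv_le_of_three_le hm hij (by have := hm i; omega) (by omega)
    linarith

theorem multiset_map_eq_of_eq_four {j : Fin 4} (hj : m j = 4) (hother : ∀ i ≠ j, m i = 2) :
    Multiset.map m univ.val = {2, 2, 2, 4} := by
  obtain rfl : m = Function.update (fun _ => 2) j 4 := by
    funext i
    by_cases hi : i = j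
    · subst hi; simp [hj]
    · simp [hi, hother i hi]
  fin_cases j <;> decide

theorem sum_inv_eq_of_multiset_map_eq (h : Multiset.map m univ.val = {2, 2, 2, 4}) :
    ∑ i, (m i : ℝ)⁻¹ = 7 / 4 := by
  rw [sum_eq_multiset_sum]
  change (Multiset.map ((fun n : ℕ => (n : ℝ)⁻¹) ∘ m) univ.val).sum = _
  rw [← Multiset.map_map, h]
  norm_num

theorem sum_inv_le_seven_fourths (hm : ∀ i, 2 ≤ m i) (hnotall : ¬ ∀ i, m i = 2)
    (hadm : IsNilpotentAdmissible m) :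
    ∑ i, (m i : ℝ)⁻¹ ≤ 7 / 4 ∧
      (∑ i, (m i : ℝ)⁻¹ = 7 / 4 → Multiset.map m univ.val = {2, 2, 2, 4}) := by
  obtain ⟨j, hj⟩ := not_forall.mp hnotall
  rcases (show m j = 3 ∨ 4 ≤ m j by have := hm j; omega) with hj3 | hj4
  · obtain ⟨k, hkj, hk⟩ := hadm.exists_ne_dvd Nat.prime_three (j := j) (by rw [hj3])
    have hk3 : 3 ≤ m k := Nat.le_of_dvd (by have := hm k; omega) hk
    have := sum_inv_le_of_three_le hm hkj.symm hj3.ge hk3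
    exact ⟨by linarith, fun h => absurd h (by linarith)⟩
  · obtain ⟨hle, heq⟩ := sum_inv_le_of_four_le hm hj4
    exact ⟨hle, fun h => multiset_map_eq_of_eq_four (heq h).1 (heq h).2⟩

end FourPeriods

theorem neg_two_add_sum_one_sub_one_div (m : Fin 4 → ℕ) :
    -2 + ∑ i, (1 - 1 / (m i : ℝ)) = 2 - ∑ i, (m i : ℝ)⁻¹ := by
  simp only [sum_sub_distrib, sum_const, card_univ, Fintype.card_fin, nsmul_eq_mul,
    Nat.cast_ofNat, mul_one, one_div]
  ring

/-- A genus-0 signature (0; m_1, m_2, m_3, m_4) with all m_i ≥ 2, not all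
equal to 2, whose p-localization is non-degenerate for every prime p, has hyperbolic
area μ = 2π(-2 + Σ(1 - 1/m_i)) ≥ π/2, with equality exactly for (0; 2,2,2,4) up to
ordering. -/
theorem genus_zero_four_periods_area_bound (m : Fin 4 → ℕ)
    (hm : ∀ i, 2 ≤ m i) (hnotall : ¬ ∀ i, m i = 2)
    (hadm : ∀ p : ℕ, p.Prime → (∃ i, p ∣ m i) →
      (3 ≤ (Finset.univ.filter fun i => p ∣ m i).card ∨
        ((Finset.univ.filter fun i => p ∣ m i).card = 2 ∧
          ∀ i j, p ∣ m i → p ∣ m j →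
            p ^ (m i).factorization p = p ^ (m j).factorization p))) :
    Real.pi / 2 ≤ 2 * Real.pi * (-2 + ∑ i, (1 - 1 / (m i : ℝ))) ∧
      (2 * Real.pi * (-2 + ∑ i, (1 - 1 / (m i : ℝ))) = Real.pi / 2 ↔
        Multiset.map m Finset.univ.val = ({2, 2, 2, 4} : Multiset ℕ)) := by
  obtain ⟨hle, hshape⟩ := sum_inv_le_seven_fourths hm hnotall hadm
  rw [neg_two_add_sum_one_sub_one_div]
  have hπ := Real.pi_pos
  refine ⟨by nlinarith, fun h => hshape ?_, fun h => ?_⟩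
  · nlinarith
  · rw [sum_inv_eq_of_multiset_map_eq h]
    ring
end

section
/- Suppose 2(g-1) = N(2h - 2 + Σ_{i=1}^l (1 - 1/m_i)) with N ≥ 1, g ≥ 2, h ≥ 0, each m_i ≥ 2, and 3h - 3 + l = 1 (one-dimensional case, so (h,l) = (1,1) or (0,4)), and the signature is nilpotent-admissible. Then N ≤ 8(g-1), and equality holds if and only if the signature is (0; 2,2,2,4) up to ordering. -/
/-!
Put `δ = ∑ (1/2 - 1/mᵢ)`. Under `3h - 3 + l = 1` the area term `2h - 2 + ∑ (1 - 1/mᵢ)` equals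
`h/2 + δ`, and Riemann–Hurwitz reads `2(g - 1) = N (h/2 + δ)`; so it suffices that
`h/2 + δ ≥ 1/4`, with equality only for `(0; 2,2,2,4)`. This is clear for `h = 1`. For `h = 0`
each summand of `δ` vanishes for a period `2` and is at least `1/6` otherwise, so `0 < δ ≤ 1/4`
leaves exactly one period `mⱼ ≠ 2`. No prime may divide just one period, so `3 ∤ mⱼ`, hence
`mⱼ ≥ 4`, `δ ≥ 1/4`, and equality forces `mⱼ = 4`.
-/

open Finset

section Signature

variable {ι : Type*} [Fintype ι] {m : ι → ℕ}

def periodExcess (m : ι → ℕ) : ℚ := ∑ i, (1 / 2 - 1 / (m i : ℚ))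

/-- `2π` times this is the hyperbolic area of an orbifold of signature `(h; m)`. -/
def normalizedArea (h : ℕ) (m : ι → ℕ) : ℚ := 2 * (h : ℚ) - 2 + ∑ i, (1 - 1 / (m i : ℚ))

lemma normalizedArea_eq (h : ℕ) (m : ι → ℕ) :
    normalizedArea h m = 2 * h - 2 + Fintype.card ι / 2 + periodExcess m := by
  simp only [normalizedArea, periodExcess, sum_sub_distrib, sum_const, card_univ, nsmul_eq_mul]
  ring

lemma half_sub_inv_nonneg {n : ℕ} (hn : 2 ≤ n) : 0 ≤ 1 / 2 - 1 / (n : ℚ) :=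
  sub_nonneg.2 <| one_div_le_one_div_of_le two_pos (by exact_mod_cast hn)

lemma periodExcess_nonneg (hm : ∀ i, 2 ≤ m i) : 0 ≤ periodExcess m :=
  sum_nonneg fun i _ => half_sub_inv_nonneg (hm i)

lemma periodExcess_eq_sum_map_univ :
    periodExcess m = ((Multiset.map m univ.val).map fun n : ℕ => 1 / 2 - 1 / (n : ℚ)).sum := by
  rw [Multiset.map_map]
  rfl

lemma exists_ne_two_of_periodExcess_pos (h : 0 < periodExcess m) : ∃ j, m j ≠ 2 := by
  by_contra! h2
  simp [periodExcess, h2] at h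

lemma periodExcess_eq_of_forall_ne_eq_two {j : ι} (h : ∀ i ≠ j, m i = 2) :
    periodExcess m = 1 / 2 - 1 / (m j : ℚ) :=
  sum_eq_single j (fun i _ hi => by rw [h i hi]; norm_num) (by simp)

lemma add_le_periodExcess (hm : ∀ i, 2 ≤ m i) {j k : ι} (hjk : j ≠ k) :
    (1 / 2 - 1 / (m j : ℚ)) + (1 / 2 - 1 / (m k : ℚ)) ≤ periodExcess m := by
  classical
  rw [← sum_pair (f := fun i => 1 / 2 - 1 / (m i : ℚ)) hjk]
  exact sum_le_sum_of_subset_of_nonneg (subset_univ _) fun i _ _ => half_sub_inv_nonneg (hm i)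

theorem quarter_le_periodExcess (hm : ∀ i, 2 ≤ m i)
    (hlone : ∀ p, p.Prime → ∀ j, p ∣ m j → ∃ i ≠ j, p ∣ m i) (hpos : 0 < periodExcess m) :
    1 / 4 ≤ periodExcess m ∧ (periodExcess m = 1 / 4 → ∃ j, m j = 4 ∧ ∀ i ≠ j, m i = 2) := by
  obtain ⟨j, hj⟩ := exists_ne_two_of_periodExcess_pos hpos
  have hj3 : 3 ≤ m j := by have := hm j; omega
  by_cases hrest : ∀ i ≠ j, m i = 2
  · have h3 : ¬ 3 ∣ m j := fun h3 => by
      obtain ⟨i, hij, hi⟩ := hlone 3 Nat.prime_three j h3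
      rw [hrest i hij] at hi
      norm_num at hi
    have hj4 : (4 : ℚ) ≤ m j := by exact_mod_cast (by omega : 4 ≤ m j)
    rw [periodExcess_eq_of_forall_ne_eq_two hrest]
    refine ⟨by linarith [one_div_le_one_div_of_le four_pos hj4], fun heq => ⟨j, ?_, hrest⟩⟩
    have : (m j : ℚ) = 4 := by
      have : 1 / (m j : ℚ) = 1 / 4 := by linarith
      simpa using this
    exact_mod_cast this
  · obtain ⟨k, hkj, hk⟩ : ∃ k ≠ j, m k ≠ 2 := by simpa using hrest
    have hk3 : (3 : ℚ) ≤ m k := by exact_mod_cast (by have := hm k; omega : 3 ≤ m k)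
    have hj3' : (3 : ℚ) ≤ m j := by exact_mod_cast hj3
    have := add_le_periodExcess hm hkj
    have := one_div_le_one_div_of_le three_pos hk3
    have := one_div_le_one_div_of_le three_pos hj3'
    exact ⟨by linarith, fun _ => by linarith⟩

lemma map_univ_val_eq_cons_replicate [DecidableEq ι] {j : ι} {a : ℕ} (h : ∀ i ≠ j, m i = a) :
    Multiset.map m univ.val = m j ::ₘ Multiset.replicate (Fintype.card ι - 1) a := by
  rw [← Multiset.cons_erase (mem_univ_val j), Multiset.map_cons]
  congr 1
  refine Multiset.eq_replicate.2 ⟨by simp, fun b hb => ?_⟩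
  obtain ⟨i, hi, rfl⟩ := Multiset.mem_map.1 hb
  exact h i ((univ.nodup.mem_erase_iff.1 hi).1)

end Signature

theorem quarter_le_normalizedArea {h l : ℕ} {m : Fin l → ℕ} (hm : ∀ i, 2 ≤ m i)
    (hdim : 3 * (h : ℤ) - 3 + l = 1)
    (hadm : ∀ p : ℕ, p.Prime → (∃ i, p ∣ m i) →
      (3 ≤ (univ.filter fun i => p ∣ m i).card ∨ 1 ≤ h ∨
        ((univ.filter fun i => p ∣ m i).card = 2 ∧
          ∀ i j, p ∣ m i → p ∣ m j →
            p ^ (m i).factorization p = p ^ (m j).factorization p)))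
    (hpos : 0 < normalizedArea h m) :
    1 / 4 ≤ normalizedArea h m ∧ (normalizedArea h m = 1 / 4 ↔
      h = 0 ∧ l = 4 ∧ Multiset.map m univ.val = ({2, 2, 2, 4} : Multiset ℕ)) := by
  obtain ⟨rfl, rfl⟩ | ⟨rfl, rfl⟩ : (h = 0 ∧ l = 4) ∨ (h = 1 ∧ l = 1) := by omega
  · have harea : normalizedArea 0 m = periodExcess m := by
      rw [normalizedArea_eq, Fintype.card_fin]; norm_num
    have hlone : ∀ p, p.Prime → ∀ j, p ∣ m j → ∃ i ≠ j, p ∣ m i := fun p hp j hj => by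
      have : 1 < (univ.filter fun i => p ∣ m i).card := by
        rcases hadm p hp ⟨j, hj⟩ with h3 | h1 | ⟨h2, -⟩ <;> omega
      obtain ⟨i, hi, hij⟩ := exists_mem_ne this j
      exact ⟨i, hij, (mem_filter.1 hi).2⟩
    rw [harea] at hpos ⊢
    obtain ⟨hle, heq⟩ := quarter_le_periodExcess hm hlone hpos
    refine ⟨hle, fun hq => ⟨rfl, rfl, ?_⟩, fun ⟨_, _, hmap⟩ => ?_⟩
    · obtain ⟨j, hj4, hj2⟩ := heq hq
      rw [map_univ_val_eq_cons_replicate hj2, hj4]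
      decide
    · rw [periodExcess_eq_sum_map_univ, hmap]
      norm_num
  · have harea : normalizedArea 1 m = 1 / 2 + periodExcess m := by
      rw [normalizedArea_eq, Fintype.card_fin]; norm_num
    have := periodExcess_nonneg hm
    rw [harea]
    exact ⟨by linarith, ⟨fun _ => by linarith, fun ⟨h10, _⟩ => absurd h10 one_ne_zero⟩⟩

lemma le_eight_mul_and_eq_iff {N G : ℕ} {χ : ℚ} (hG : G ≠ 0) (hRH : 2 * (G : ℚ) = N * χ)
    (hχ : 1 / 4 ≤ χ) : N ≤ 8 * G ∧ (N = 8 * G ↔ χ = 1 / 4) := by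
  have hG' : (G : ℚ) ≠ 0 := by exact_mod_cast hG
  have hN : (0 : ℚ) ≤ N := N.cast_nonneg
  refine ⟨by exact_mod_cast (by nlinarith : (N : ℚ) ≤ 8 * G), ?_⟩
  constructor
  · rintro rfl
    push_cast at hRH
    apply mul_left_cancel₀ hG'
    linarith
  · rintro rfl
    exact_mod_cast (by linarith : (N : ℚ) = 8 * G)

theorem nilpotent_dim_one_bound_general (N g h l : ℕ) (m : Fin l → ℕ)
    (hg : 2 ≤ g) (hm : ∀ i, 2 ≤ m i)
    (hdim : 3 * (h : ℤ) - 3 + l = 1)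
    (hadm : ∀ p : ℕ, p.Prime → (∃ i, p ∣ m i) →
      (3 ≤ (Finset.univ.filter fun i => p ∣ m i).card ∨ 1 ≤ h ∨
        ((Finset.univ.filter fun i => p ∣ m i).card = 2 ∧
          ∀ i j, p ∣ m i → p ∣ m j →
            p ^ (m i).factorization p = p ^ (m j).factorization p)))
    (hRH : 2 * ((g : ℚ) - 1) = N * (2 * (h : ℚ) - 2 + ∑ i, (1 - 1 / (m i : ℚ)))) :
    N ≤ 8 * (g - 1) ∧
      (N = 8 * (g - 1) ↔
        (h = 0 ∧ l = 4 ∧ Multiset.map m Finset.univ.val = ({2, 2, 2, 4} : Multiset ℕ))) := by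
  have hRH' : 2 * ((g - 1 : ℕ) : ℚ) = N * normalizedArea h m := by
    rw [Nat.cast_sub (by omega), Nat.cast_one]
    exact hRH
  have hpos : 0 < normalizedArea h m := by
    refine pos_of_mul_pos_right (hRH' ▸ ?_) N.cast_nonneg
    have : 0 < g - 1 := by omega
    positivity
  obtain ⟨hle, harea⟩ := quarter_le_normalizedArea hm hdim hadm hpos
  obtain ⟨hN, hNeq⟩ := le_eight_mul_and_eq_iff (by omega) hRH' hle
  exact ⟨hN, hNeq.trans harea⟩

/-- For a nilpotent-admissible signature of Teichmüller dimension 1 with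
Riemann–Hurwitz 2(g-1) = N(2h - 2 + Σ(1 - 1/m_i)), one has N ≤ 8(g-1), with equality
iff the signature is (0; 2,2,2,4) up to ordering. -/
theorem nilpotent_dim_one_bound (N g h l : ℕ) (m : Fin l → ℕ)
    (hN : 1 ≤ N) (hg : 2 ≤ g) (hm : ∀ i, 2 ≤ m i)
    (hdim : 3 * (h : ℤ) - 3 + l = 1)
    (hadm : ∀ p : ℕ, p.Prime → (∃ i, p ∣ m i) →
      (3 ≤ (Finset.univ.filter fun i => p ∣ m i).card ∨ 1 ≤ h ∨
        ((Finset.univ.filter fun i => p ∣ m i).card = 2 ∧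
          ∀ i j, p ∣ m i → p ∣ m j →
            p ^ (m i).factorization p = p ^ (m j).factorization p)))
    (hRH : 2 * ((g : ℚ) - 1) = N * (2 * (h : ℚ) - 2 + ∑ i, (1 - 1 / (m i : ℚ)))) :
    N ≤ 8 * (g - 1) ∧
      (N = 8 * (g - 1) ↔
        (h = 0 ∧ l = 4 ∧ Multiset.map m Finset.univ.val = ({2, 2, 2, 4} : Multiset ℕ))) :=
  nilpotent_dim_one_bound_general N g h l m hg hm hdim hadm hRH
end

section
/- Let p = 3 and let G be a 3-group acting on a genus-g (g ≥ 2) surface with signature (h; m_1, …, m_l) where every m_i is a power of 3 (each m_i ≥ 3), with Riemann–Hurwitz 2(g-1) = |G|(2h - 2 + Σ(1 - 1/m_i)) and d := 3h - 3 + l ≥ 1. Then |G| ≤ 3(g-1)/d. -/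
/-! Every period is at least 3, so each term `1 - 1/mᵢ` of the Riemann–Hurwitz sum is at least
`2/3`, i.e. `l ≤ (3/2) Σ (1 - 1/mᵢ)`. Hence
`N d = N (3h - 3 + l) ≤ (3/2) N (2h - 2 + Σ (1 - 1/mᵢ)) = 3 (g - 1)`. -/

theorem card_mul_one_sub_inv_le_sum_one_sub_inv {K ι : Type*} [Field K] [LinearOrder K]
    [IsStrictOrderedRing K] [Fintype ι] {p : K} (hp : 0 < p) (m : ι → K) (hm : ∀ i, p ≤ m i) :
    Fintype.card ι * (1 - 1 / p) ≤ ∑ i, (1 - 1 / m i) := by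
  have hterm : ∀ i ∈ Finset.univ, 1 - 1 / p ≤ 1 - 1 / m i := fun i _ =>
    sub_le_sub_left (one_div_le_one_div_of_le hp (hm i)) 1
  simpa [nsmul_eq_mul] using Finset.card_nsmul_le_sum Finset.univ _ _ hterm

theorem three_group_bound_general (N g d h l : ℕ) (m : Fin l → ℕ)
    (hm3 : ∀ i, 3 ≤ m i)
    (hd : 1 ≤ d) (hdim : 3 * (h : ℤ) - 3 + l = d)
    (hRH : 2 * ((g : ℚ) - 1) = N * (2 * (h : ℚ) - 2 + ∑ i, (1 - 1 / (m i : ℚ)))) :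
    (N : ℚ) ≤ 3 * ((g : ℚ) - 1) / (d : ℚ) := by
  have hdQ : (d : ℚ) = 3 * h - 3 + l := by exact_mod_cast hdim.symm
  have hperiods : (l : ℚ) * (1 - 1 / 3) ≤ ∑ i, (1 - 1 / (m i : ℚ)) := by
    simpa using card_mul_one_sub_inv_le_sum_one_sub_inv (by norm_num : (0 : ℚ) < 3)
      (fun i => (m i : ℚ)) (fun i => by exact_mod_cast hm3 i)
  have hNd : (N : ℚ) * d ≤ 3 * ((g : ℚ) - 1) := by
    rw [hdQ]
    linarith [mul_le_mul_of_nonneg_left hperiods (Nat.cast_nonneg N : (0 : ℚ) ≤ N)]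
  rwa [le_div_iff₀ (by exact_mod_cast hd)]

/-- A 3-group of order N acting with signature (h; m_1,…,m_l), all periods
powers of 3 (≥ 3), Riemann–Hurwitz 2(g-1) = N(2h - 2 + Σ(1 - 1/m_i)) and dimension
d = 3h - 3 + l ≥ 1, satisfies N ≤ 3(g-1)/d. -/
theorem three_group_bound (N g d h l : ℕ) (m : Fin l → ℕ)
    (hN : 1 ≤ N) (hg : 2 ≤ g)
    (hm3 : ∀ i, 3 ≤ m i) (hmpow : ∀ i, ∃ k : ℕ, m i = 3 ^ k)
    (hd : 1 ≤ d) (hdim : 3 * (h : ℤ) - 3 + l = d)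
    (hRH : 2 * ((g : ℚ) - 1) = N * (2 * (h : ℚ) - 2 + ∑ i, (1 - 1 / (m i : ℚ)))) :
    (N : ℚ) ≤ 3 * ((g : ℚ) - 1) / (d : ℚ) :=
  three_group_bound_general N g d h l m hm3 hd hdim hRH
end

section
/- With the hypotheses of the p = 3 bound (N a positive integer, g ≥ 2, h ≥ 0, each m_i a power of 3 with m_i ≥ 3, 2(g-1) = N(2h - 2 + Σ(1 - 1/m_i)), d = 3h - 3 + l ≥ 1), equality N = 3(g-1)/d holds if and only if every m_i = 3 and l = d + 3 - 3h for some integer h with 0 ≤ h ≤ ⌊d/3 + 1⌋. -/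
/-!
Since `2h - 2 + (2/3) l = (2/3) d`, the Riemann–Hurwitz relation reads
`3 (g - 1) = N d + (3/2) N ∑ (1/3 - 1/mᵢ)`. Every summand is nonnegative because `mᵢ ≥ 3`, and
vanishes exactly when `mᵢ = 3`; so `N d = 3 (g - 1)` iff all periods equal `3`. The conditions on
`l` and `h` are then just a rearrangement of `d = 3h - 3 + l`.
-/

open Finset

theorem one_div_three_sub_one_div_eq_zero_iff (m : ℕ) : (1 / 3 : ℚ) - 1 / m = 0 ↔ m = 3 := by
  rw [sub_eq_zero, one_div, one_div, inv_inj, eq_comm]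
  norm_cast

theorem sum_one_div_three_sub_one_div_eq_zero_iff {ι : Type*} [Fintype ι] (m : ι → ℕ)
    (hm : ∀ i, 3 ≤ m i) : ∑ i, ((1 / 3 : ℚ) - 1 / m i) = 0 ↔ ∀ i, m i = 3 := by
  have hnonneg : ∀ i ∈ univ, (0 : ℚ) ≤ 1 / 3 - 1 / m i := fun i _ => by
    have : (3 : ℚ) ≤ m i := by exact_mod_cast hm i
    rw [sub_nonneg]
    exact one_div_le_one_div_of_le (by norm_num) this
  rw [sum_eq_zero_iff_of_nonneg hnonneg]
  simp only [mem_univ, true_implies, one_div_three_sub_one_div_eq_zero_iff]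

theorem orbifold_char_eq (h l : ℕ) (m : Fin l → ℕ) :
    2 * (h : ℚ) - 2 + ∑ i, (1 - 1 / (m i : ℚ)) =
      2 / 3 * (3 * h - 3 + l) + ∑ i, ((1 / 3 : ℚ) - 1 / m i) := by
  have : ∑ i, (1 - 1 / (m i : ℚ)) = ∑ _i : Fin l, (2 / 3 : ℚ) + ∑ i, ((1 / 3 : ℚ) - 1 / m i) := by
    rw [← sum_add_distrib]
    exact sum_congr rfl fun _ _ => by ring
  rw [this, sum_const, card_univ, Fintype.card_fin, nsmul_eq_mul]
  ring

theorem three_group_equality_general (N g d h l : ℕ) (m : Fin l → ℕ)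
    (hN : 1 ≤ N)
    (hm3 : ∀ i, 3 ≤ m i)
    (hd : 1 ≤ d) (hdim : 3 * (h : ℤ) - 3 + l = d)
    (hRH : 2 * ((g : ℚ) - 1) = N * (2 * (h : ℚ) - 2 + ∑ i, (1 - 1 / (m i : ℚ)))) :
    (N : ℚ) = 3 * ((g : ℚ) - 1) / (d : ℚ) ↔
      ((∀ i, m i = 3) ∧ (l : ℤ) = d + 3 - 3 * h ∧ h ≤ d / 3 + 1) := by
  have hl : (l : ℤ) = d + 3 - 3 * h ∧ h ≤ d / 3 + 1 := by omega
  have hNQ : (N : ℚ) ≠ 0 := by positivity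
  have hdQ : (d : ℚ) ≠ 0 := by positivity
  have hdimQ : 3 * (h : ℚ) - 3 + l = d := by exact_mod_cast hdim
  rw [orbifold_char_eq, hdimQ] at hRH
  set D := ∑ i, ((1 / 3 : ℚ) - 1 / m i) with hD
  have hgap : 3 * ((g : ℚ) - 1) - N * d = 3 / 2 * (N * D) := by linear_combination 3 / 2 * hRH
  rw [eq_div_iff hdQ, ← sum_one_div_three_sub_one_div_eq_zero_iff m hm3, ← hD]
  simp only [hl, and_true]
  constructor
  · intro hEq
    exact (mul_eq_zero.mp (show (N : ℚ) * D = 0 by linarith)).resolve_left hNQ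
  · intro hD0
    linear_combination -hgap - 3 / 2 * N * hD0

/-- In the p = 3 setup, equality N = 3(g-1)/d holds iff every period is 3
and l = d + 3 - 3h with 0 ≤ h ≤ ⌊d/3 + 1⌋. -/
theorem three_group_equality (N g d h l : ℕ) (m : Fin l → ℕ)
    (hN : 1 ≤ N) (hg : 2 ≤ g)
    (hm3 : ∀ i, 3 ≤ m i) (hmpow : ∀ i, ∃ k : ℕ, m i = 3 ^ k)
    (hd : 1 ≤ d) (hdim : 3 * (h : ℤ) - 3 + l = d)
    (hRH : 2 * ((g : ℚ) - 1) = N * (2 * (h : ℚ) - 2 + ∑ i, (1 - 1 / (m i : ℚ)))) :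
    (N : ℚ) = 3 * ((g : ℚ) - 1) / (d : ℚ) ↔
      ((∀ i, m i = 3) ∧ (l : ℤ) = d + 3 - 3 * h ∧ h ≤ d / 3 + 1) :=
  three_group_equality_general N g d h l m hN hm3 hd hdim hRH
end

section
/- Let p ≥ 5 be a prime, and suppose N ≥ 1, g ≥ 2, h ≥ 0 are integers, each period m_i is a power of p (m_i ≥ p), 2(g-1) = N(2h - 2 + Σ_{i=1}^l(1 - 1/m_i)), and d := 3h - 3 + l ≥ 1. Let λ be the residue of d modulo 3 (λ ∈ {0,1,2}). Then N ≤ 2(g-1)/((2/3)d + λ(1/3 - 1/p)). -/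
/-!
Since `d = 3h - 3 + l`, we have `(2/3)d = 2h - 2 + (2/3)l`, so by Riemann–Hurwitz it suffices that
`∑ (1 - 1/mᵢ) ≥ (2/3)l + λ(1/3 - 1/p)`. Each term is at least `1 - 1/p = 2/3 + (1/3 - 1/p)`,
and `λ ≤ l` because `λ ≡ l (mod 3)`.
-/

section OrderedField

variable {K : Type*} [Field K] [LinearOrder K] [IsStrictOrderedRing K]

lemma one_div_three_sub_one_div_nonneg {p : K} (hp : 3 ≤ p) : 0 ≤ 1 / 3 - 1 / p :=
  sub_nonneg.2 (one_div_le_one_div_of_le three_pos hp)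

lemma card_mul_one_sub_one_div_le_sum {ι : Type*} [Fintype ι] {p : K} {m : ι → K}
    (hp : 0 < p) (hm : ∀ i, p ≤ m i) :
    Fintype.card ι * (1 - 1 / p) ≤ ∑ i, (1 - 1 / m i) := by
  simpa [nsmul_eq_mul] using Finset.card_nsmul_le_sum Finset.univ (fun i ↦ 1 - 1 / m i) _
    fun i _ ↦ sub_le_sub_left (one_div_le_one_div_of_le hp (hm i)) 1

lemma two_thirds_mul_add_le_orbifold_sum {ι : Type*} [Fintype ι] {p h d lam : K} {m : ι → K}
    (hp : 3 ≤ p) (hm : ∀ i, p ≤ m i) (hlam : lam ≤ Fintype.card ι)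
    (hd : d = 3 * h - 3 + Fintype.card ι) :
    2 / 3 * d + lam * (1 / 3 - 1 / p) ≤ 2 * h - 2 + ∑ i, (1 - 1 / m i) := by
  have hsum := card_mul_one_sub_one_div_le_sum (by linarith) hm
  calc 2 / 3 * d + lam * (1 / 3 - 1 / p)
      ≤ 2 / 3 * d + Fintype.card ι * (1 / 3 - 1 / p) := by
        gcongr
        exact one_div_three_sub_one_div_nonneg hp
    _ = 2 * h - 2 + Fintype.card ι * (1 - 1 / p) := by rw [hd]; ring
    _ ≤ 2 * h - 2 + ∑ i, (1 - 1 / m i) := by linarith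

end OrderedField

theorem p_group_bound_general (p N g d h l : ℕ) (m : Fin l → ℕ)
    (hp5 : 5 ≤ p)
    (hmp : ∀ i, p ≤ m i)
    (hd : 1 ≤ d) (hdim : 3 * (h : ℤ) - 3 + l = d)
    (hRH : 2 * ((g : ℚ) - 1) = N * (2 * (h : ℚ) - 2 + ∑ i, (1 - 1 / (m i : ℚ)))) :
    (N : ℚ) ≤ 2 * ((g : ℚ) - 1) /
      ((2 / 3) * (d : ℚ) + ((d % 3 : ℕ) : ℚ) * (1 / 3 - 1 / (p : ℚ))) := by
  have hp3 : (3 : ℚ) ≤ p := by exact_mod_cast (by omega : 3 ≤ p)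
  have hlam : ((d % 3 : ℕ) : ℚ) ≤ l := by exact_mod_cast (by omega : d % 3 ≤ l)
  have hdQ : (d : ℚ) = 3 * h - 3 + l := by exact_mod_cast hdim.symm
  have hpos : 0 < (2 / 3) * (d : ℚ) + ((d % 3 : ℕ) : ℚ) * (1 / 3 - 1 / (p : ℚ)) :=
    add_pos_of_pos_of_nonneg (mul_pos (by norm_num) (by exact_mod_cast hd))
      (mul_nonneg (Nat.cast_nonneg _) (one_div_three_sub_one_div_nonneg hp3))
  rw [le_div_iff₀ hpos, hRH]
  exact mul_le_mul_of_nonneg_left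
    (two_thirds_mul_add_le_orbifold_sum hp3 (fun i ↦ by exact_mod_cast hmp i)
      (by simpa using hlam) (by simpa using hdQ))
    (Nat.cast_nonneg N)

/-- For a prime p ≥ 5, a p-group of order N acting with all periods powers
of p (≥ p), Riemann–Hurwitz, and dimension d = 3h - 3 + l ≥ 1, satisfies
N ≤ 2(g-1)/((2/3)d + λ(1/3 - 1/p)) where λ = d mod 3. -/
theorem p_group_bound (p N g d h l : ℕ) (m : Fin l → ℕ)
    (hp : p.Prime) (hp5 : 5 ≤ p)
    (hN : 1 ≤ N) (hg : 2 ≤ g)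
    (hmp : ∀ i, p ≤ m i) (hmpow : ∀ i, ∃ k : ℕ, m i = p ^ k)
    (hd : 1 ≤ d) (hdim : 3 * (h : ℤ) - 3 + l = d)
    (hRH : 2 * ((g : ℚ) - 1) = N * (2 * (h : ℚ) - 2 + ∑ i, (1 - 1 / (m i : ℚ)))) :
    (N : ℚ) ≤ 2 * ((g : ℚ) - 1) /
      ((2 / 3) * (d : ℚ) + ((d % 3 : ℕ) : ℚ) * (1 / 3 - 1 / (p : ℚ))) :=
  p_group_bound_general p N g d h l m hp5 hmp hd hdim hRH
end

section
/- With the hypotheses of the p ≥ 5 bound, equality N = 2(g-1)/((2/3)d + λ(1/3 - 1/p)) holds if and only if h = ⌊d/3 + 1⌋, l = d + 3 - 3h = λ, and every m_i = p. -/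
/-!
Write `A = 2h - 2 + ∑ (1 - 1/mᵢ)` for the orbifold area (divided by `2π`) of the quotient by the
`p`-group, so that Riemann–Hurwitz reads `2(g - 1) = N A`, and `B = (2/3)d + λ(1/3 - 1/p)` for the
bound. Using `3h + l = d + 3` one finds the identity
`A - B = ∑ (1/p - 1/mᵢ) + (⌊d/3⌋ + 1 - h)(1 - 3/p)`,
whose two summands are nonnegative because `mᵢ ≥ p` and `l ≥ 0`, with `p > 3`. Hence
`N = 2(g - 1)/B` iff `A = B` iff both summands vanish, i.e. `mᵢ = p` for all `i` and
`h = ⌊d/3⌋ + 1`, which forces `l = d mod 3`.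
-/

open Finset

def orbifoldArea (h : ℕ) {l : ℕ} (m : Fin l → ℕ) : ℚ :=
  2 * h - 2 + ∑ i, (1 - 1 / (m i : ℚ))

def pGroupAreaBound (p d : ℕ) : ℚ :=
  (2 / 3) * d + ((d % 3 : ℕ) : ℚ) * (1 / 3 - 1 / (p : ℚ))

lemma pGroupAreaBound_pos {p d : ℕ} (hp : 3 ≤ p) (hd : 1 ≤ d) : 0 < pGroupAreaBound p d := by
  have hinv : 1 / (p : ℚ) ≤ 1 / 3 := one_div_le_one_div_of_le (by norm_num) (by exact_mod_cast hp)
  have hd' : (1 : ℚ) ≤ d := by exact_mod_cast hd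
  unfold pGroupAreaBound
  nlinarith [(Nat.cast_nonneg (d % 3) : (0 : ℚ) ≤ _)]

lemma orbifoldArea_sub_pGroupAreaBound (p : ℕ) {h d l : ℕ} (m : Fin l → ℕ)
    (hdim : 3 * h + l = d + 3) :
    orbifoldArea h m - pGroupAreaBound p d =
      ∑ i, (1 / (p : ℚ) - 1 / (m i : ℚ)) + (((d / 3 : ℕ) : ℚ) + 1 - h) * (1 - 3 / (p : ℚ)) := by
  have hdim' : (3 * h + l : ℚ) = d + 3 := by exact_mod_cast hdim
  have hdiv : (d : ℚ) = 3 * ((d / 3 : ℕ) : ℚ) + ((d % 3 : ℕ) : ℚ) := by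
    exact_mod_cast (Nat.div_add_mod d 3).symm
  have hsum : ∑ i, (1 - 1 / (m i : ℚ)) =
      l * (1 - 1 / (p : ℚ)) + ∑ i, (1 / (p : ℚ) - 1 / (m i : ℚ)) := by
    simp only [sum_sub_distrib, sum_const, card_univ, Fintype.card_fin, nsmul_eq_mul, mul_one]
    ring
  rw [orbifoldArea, pGroupAreaBound, hsum]
  linear_combination (1 - 1 / (p : ℚ)) * hdim' + (1 - 3 / (p : ℚ)) / 3 * hdiv

section
variable {ι K : Type*} [Field K] [LinearOrder K] [IsStrictOrderedRing K]
  {s : Finset ι} {p : K} {m : ι → K}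

lemma sum_inv_sub_inv_nonneg (hp : 0 < p) (hm : ∀ i ∈ s, p ≤ m i) :
    0 ≤ ∑ i ∈ s, (1 / p - 1 / m i) :=
  sum_nonneg fun i hi => sub_nonneg.2 (one_div_le_one_div_of_le hp (hm i hi))

lemma sum_inv_sub_inv_eq_zero_iff (hp : 0 < p) (hm : ∀ i ∈ s, p ≤ m i) :
    ∑ i ∈ s, (1 / p - 1 / m i) = 0 ↔ ∀ i ∈ s, m i = p := by
  rw [sum_eq_zero_iff_of_nonneg fun i hi => sub_nonneg.2 (one_div_le_one_div_of_le hp (hm i hi))]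
  refine forall₂_congr fun i hi => ?_
  rw [sub_eq_zero, one_div, one_div, inv_inj, eq_comm]

end

lemma orbifoldArea_eq_pGroupAreaBound_iff {p h d l : ℕ} {m : Fin l → ℕ} (hp : 3 < p)
    (hmp : ∀ i, p ≤ m i) (hdim : 3 * h + l = d + 3) :
    orbifoldArea h m = pGroupAreaBound p d ↔ h = d / 3 + 1 ∧ ∀ i, m i = p := by
  have hp0 : (0 : ℚ) < p := by positivity
  have hmp' : ∀ i ∈ univ, (p : ℚ) ≤ m i := fun i _ => by exact_mod_cast hmp i
  have hfactor : (0 : ℚ) < 1 - 3 / p := by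
    rw [sub_pos, div_lt_one hp0]
    exact_mod_cast hp
  have hgenus : (h : ℚ) ≤ (d / 3 : ℕ) + 1 := by exact_mod_cast (by omega : h ≤ d / 3 + 1)
  rw [← sub_eq_zero, orbifoldArea_sub_pGroupAreaBound p m hdim,
    add_eq_zero_iff_of_nonneg (sum_inv_sub_inv_nonneg hp0 hmp')
      (mul_nonneg (by linarith) hfactor.le),
    sum_inv_sub_inv_eq_zero_iff hp0 hmp', mul_eq_zero, or_iff_left hfactor.ne', and_comm]
  refine and_congr ?_ (by simp only [mem_univ, forall_const, Nat.cast_inj])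
  rw [sub_eq_zero, eq_comm]
  exact_mod_cast Iff.rfl

theorem p_group_equality_general (p N g d h l : ℕ) (m : Fin l → ℕ)
    (hp5 : 5 ≤ p)
    (hN : 1 ≤ N)
    (hmp : ∀ i, p ≤ m i)
    (hd : 1 ≤ d) (hdim : 3 * (h : ℤ) - 3 + l = d)
    (hRH : 2 * ((g : ℚ) - 1) = N * (2 * (h : ℚ) - 2 + ∑ i, (1 - 1 / (m i : ℚ)))) :
    (N : ℚ) = 2 * ((g : ℚ) - 1) /
        ((2 / 3) * (d : ℚ) + ((d % 3 : ℕ) : ℚ) * (1 / 3 - 1 / (p : ℚ))) ↔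
      (h = d / 3 + 1 ∧ l = d % 3 ∧ ∀ i, m i = p) := by
  have hdim' : 3 * h + l = d + 3 := by omega
  have hN0 : (N : ℚ) ≠ 0 := Nat.cast_ne_zero.2 (by omega)
  change _ = _ / pGroupAreaBound p d ↔ _
  rw [eq_div_iff (pGroupAreaBound_pos (by omega) hd).ne', hRH, ← orbifoldArea,
    mul_right_inj' hN0, eq_comm, orbifoldArea_eq_pGroupAreaBound_iff (by omega) hmp hdim']
  exact and_congr_right fun hh => (and_iff_right (by omega)).symm

/-- In the p ≥ 5 setup, equality N = 2(g-1)/((2/3)d + λ(1/3 - 1/p)) holds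
iff h = ⌊d/3 + 1⌋, l = λ, and every period equals p. -/
theorem p_group_equality (p N g d h l : ℕ) (m : Fin l → ℕ)
    (hp : p.Prime) (hp5 : 5 ≤ p)
    (hN : 1 ≤ N) (hg : 2 ≤ g)
    (hmp : ∀ i, p ≤ m i) (hmpow : ∀ i, ∃ k : ℕ, m i = p ^ k)
    (hd : 1 ≤ d) (hdim : 3 * (h : ℤ) - 3 + l = d)
    (hRH : 2 * ((g : ℚ) - 1) = N * (2 * (h : ℚ) - 2 + ∑ i, (1 - 1 / (m i : ℚ)))) :
    (N : ℚ) = 2 * ((g : ℚ) - 1) /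
        ((2 / 3) * (d : ℚ) + ((d % 3 : ℕ) : ℚ) * (1 / 3 - 1 / (p : ℚ))) ↔
      (h = d / 3 + 1 ∧ l = d % 3 ∧ ∀ i, m i = p) :=
  p_group_equality_general p N g d h l m hp5 hN hmp hd hdim hRH
end

section
/- For each integer n ≥ 5, the group G of order 2^n presented by generators a, b, r, s and relations r^{2^{n-3}} = s^2 = (sr)^2 = a^2 = b^2 = 1, [s,b] = [r,b] = 1, ara = r^{-1}, asa = sr, aba = b r^{2^{n-4}} is a nilpotent group (a 2-group) of order 2^n, isomorphic to a semidirect product (C_2 × D_{2^{n-3}}) ⋊ C_2. -/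
/-!
Write `z = r ^ 2 ^ (n - 4)` for the central involution of `D = D_{2^{n-3}}`, and let `C₂` act on
`C₂ × D` by the involution `b ↦ b z, r ↦ r⁻¹, s ↦ s r`. Sending `a ↦ (1, 1, a)`, `b ↦ (b, 1, 1)`,
`r ↦ (1, r, 1)`, `s ↦ (1, s, 1)` respects all ten relations, so it defines a homomorphism from the
presented group `G` to `(C₂ × D) ⋊ C₂`. Conversely, in `G` the elements `r, s` satisfy the dihedral
relations and commute with the involution `b`, so `⟨b, r, s⟩` is a quotient of `C₂ × D`, and the
last three relations say that conjugation by `a` acts on it by the same involution; this gives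
a homomorphism back, and the two maps are mutually inverse because they are on generators.
Hence `|G| = 2 · 2 · 2^{n-3} · 2 = 2^n`, and a finite `2`-group is nilpotent.
-/

/-- The relators of the group G of order 2^n from Theorem 2: generators a, b, r, s
(indices 0, 1, 2, 3) with relations r^{2^{n-3}} = s^2 = (sr)^2 = a^2 = b^2 = 1,
[s,b] = [r,b] = 1, ara = r⁻¹, asa = sr, aba = b r^{2^{n-4}}. -/
def nilRels (n : ℕ) : Set (FreeGroup (Fin 4)) :=
  let a := FreeGroup.of (0 : Fin 4)
  let b := FreeGroup.of (1 : Fin 4)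
  let r := FreeGroup.of (2 : Fin 4)
  let s := FreeGroup.of (3 : Fin 4)
  {r ^ 2 ^ (n - 3), s ^ 2, (s * r) ^ 2, a ^ 2, b ^ 2,
    s * b * s⁻¹ * b⁻¹, r * b * r⁻¹ * b⁻¹,
    a * r * a * r, a * s * a * (s * r)⁻¹, a * b * a * (b * r ^ 2 ^ (n - 4))⁻¹}

open Multiplicative

section ZModPow

variable {M : Type*} [Monoid M] {m : ℕ} {g : M}

lemma pow_val_one (hg : g ^ m = 1) : g ^ (1 : ZMod m).val = g := by
  rw [ZMod.val_one_eq_one_mod, ← pow_eq_pow_mod _ hg, pow_one]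

variable [NeZero m]

lemma pow_val_add (hg : g ^ m = 1) (i j : ZMod m) : g ^ (i + j).val = g ^ i.val * g ^ j.val := by
  rw [ZMod.val_add, ← pow_eq_pow_mod _ hg, pow_add]

variable (g) in
def zmodPowHom (hg : g ^ m = 1) : Multiplicative (ZMod m) →* M where
  toFun i := g ^ (toAdd i).val
  map_one' := by simp
  map_mul' i j := pow_val_add hg (toAdd i) (toAdd j)

@[simp] lemma zmodPowHom_ofAdd (hg : g ^ m = 1) (i : ZMod m) :
    zmodPowHom g hg (ofAdd i) = g ^ i.val := rfl

lemma zmodPowHom_ofAdd_one (hg : g ^ m = 1) : zmodPowHom g hg (ofAdd 1) = g :=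
  pow_val_one hg

lemma MonoidHom.ext_zmod {f f' : Multiplicative (ZMod m) →* M} (h : f (ofAdd 1) = f' (ofAdd 1)) :
    f = f' := by
  refine MonoidHom.ext fun i => ?_
  have hi : i = ofAdd 1 ^ (toAdd i).val := by
    rw [← ofAdd_nsmul, nsmul_one, ZMod.natCast_zmod_val, ofAdd_toAdd]
  rw [hi, map_pow, map_pow, h]

end ZModPow

lemma pow_val_neg {G : Type*} [Group G] {m : ℕ} [NeZero m] {g : G} (hg : g ^ m = 1)
    (i : ZMod m) : g ^ (-i).val = (g ^ i.val)⁻¹ :=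
  eq_inv_of_mul_eq_one_left <| by rw [← pow_val_add hg, neg_add_cancel, ZMod.val_zero, pow_zero]

lemma MonoidHom.prod_ext {M N P : Type*} [MulOneClass M] [MulOneClass N] [MulOneClass P]
    {f f' : M × N →* P} (hl : f.comp (MonoidHom.inl M N) = f'.comp (MonoidHom.inl M N))
    (hr : f.comp (MonoidHom.inr M N) = f'.comp (MonoidHom.inr M N)) : f = f' := by
  refine MonoidHom.ext fun p => ?_
  rw [← Prod.fst_mul_snd p, map_mul, map_mul]
  exact congr_arg₂ (· * ·) (DFunLike.congr_fun hl p.1) (DFunLike.congr_fun hr p.2)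

namespace DihedralGroup

variable {m : ℕ}

section Lift

variable {G : Type*} [Group G] [NeZero m] {ρ σ : G}
  (hρ : ρ ^ m = 1) (hσ : σ * σ = 1) (hσρ : σ * ρ * σ = ρ⁻¹)
include hρ hσ hσρ

lemma pow_val_mul_eq_mul_pow_val_neg (i : ZMod m) : ρ ^ i.val * σ = σ * ρ ^ (-i).val := by
  have hconj : σ * ρ ^ i.val * σ⁻¹ = (ρ ^ i.val)⁻¹ := by
    rw [← conj_pow, inv_eq_of_mul_eq_one_right hσ, hσρ, inv_pow]
  rw [pow_val_neg hρ, ← hconj, inv_eq_of_mul_eq_one_right hσ, ← mul_assoc, ← mul_assoc, hσ,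
    one_mul]

def lift : DihedralGroup m →* G where
  toFun
    | .r i => ρ ^ i.val
    | .sr i => σ * ρ ^ i.val
  map_one' := by simp [← r_zero]
  map_mul' x y := by
    have hcomm := pow_val_mul_eq_mul_pow_val_neg hρ hσ hσρ
    rcases x with i | i <;> rcases y with j | j <;>
      simp only [r_mul_r, r_mul_sr, sr_mul_r, sr_mul_sr]
    · exact pow_val_add hρ i j
    · rw [← mul_assoc, hcomm, mul_assoc, ← pow_val_add hρ, neg_add_eq_sub]
    · rw [mul_assoc, pow_val_add hρ]
    · rw [mul_assoc, ← mul_assoc (ρ ^ i.val), hcomm, ← mul_assoc, ← mul_assoc, hσ, one_mul,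
        ← pow_val_add hρ, neg_add_eq_sub]

@[simp] lemma lift_r (i : ZMod m) : lift hρ hσ hσρ (r i) = ρ ^ i.val := rfl

@[simp] lemma lift_sr (i : ZMod m) : lift hρ hσ hσρ (sr i) = σ * ρ ^ i.val := rfl

end Lift

theorem hom_ext [NeZero m] {M : Type*} [Monoid M] {f f' : DihedralGroup m →* M}
    (hr : f (r 1) = f' (r 1)) (hsr : f (sr 0) = f' (sr 0)) : f = f' := by
  have hr_pow (i : ZMod m) : r i = r 1 ^ i.val := by rw [r_one_pow, ZMod.natCast_zmod_val]
  refine MonoidHom.ext fun x => ?_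
  rcases x with i | i
  · rw [hr_pow, map_pow, map_pow, hr]
  · rw [← zero_add i, ← sr_mul_r, hr_pow, map_mul, map_mul, map_pow, map_pow, hr, hsr]

def invertRotations (m : ℕ) : DihedralGroup m →* DihedralGroup m where
  toFun
    | .r i => r (-i)
    | .sr i => sr (1 - i)
  map_one' := by simp [← r_zero]
  map_mul' x y := by
    rcases x with i | i <;> rcases y with j | j <;>
      simp only [r_mul_r, r_mul_sr, sr_mul_r, sr_mul_sr, r.injEq, sr.injEq] <;> ring

@[simp] lemma invertRotations_r (i : ZMod m) : invertRotations m (r i) = r (-i) := rfl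

@[simp] lemma invertRotations_sr (i : ZMod m) : invertRotations m (sr i) = sr (1 - i) := rfl

lemma invertRotations_invertRotations (x : DihedralGroup m) :
    invertRotations m (invertRotations m x) = x := by
  rcases x with i | i <;> simp

section Central

variable {i : ZMod m} (hi : i + i = 0)
include hi

lemma r_sq_of_add_self_eq_zero : r i ^ 2 = 1 := by
  rw [sq, r_mul_r, hi, r_zero]

lemma commute_r_of_add_self_eq_zero (x : DihedralGroup m) : Commute (r i) x := by
  rcases x with j | j
  · show r i * r j = r j * r i
    rw [r_mul_r, r_mul_r, add_comm]
  · show r i * sr j = sr j * r i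
    rw [r_mul_sr, sr_mul_r, sub_eq_add_neg, neg_eq_of_add_eq_zero_right hi]

lemma invertRotations_r_of_add_self_eq_zero : invertRotations m (r i) = r i := by
  rw [invertRotations_r, neg_eq_of_add_eq_zero_right hi]

end Central

end DihedralGroup

section Twist

open DihedralGroup

variable {m : ℕ} {i : ZMod m} (hi : i + i = 0)

def twist :
    Multiplicative (ZMod 2) × DihedralGroup m →* Multiplicative (ZMod 2) × DihedralGroup m :=
  ((MonoidHom.id _).prod (zmodPowHom (r i) (r_sq_of_add_self_eq_zero hi))).noncommCoprod
    ((MonoidHom.inr _ _).comp (invertRotations m))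
    fun _ _ => Prod.ext (Commute.one_right _) ((commute_r_of_add_self_eq_zero hi _).pow_left _).eq

lemma twist_apply (p : Multiplicative (ZMod 2) × DihedralGroup m) :
    twist hi p = (p.1, r i ^ (toAdd p.1).val * invertRotations m p.2) :=
  Prod.ext (mul_one _) rfl

lemma twist_one_mk (x : DihedralGroup m) : twist hi (1, x) = (1, invertRotations m x) := by
  rw [twist_apply, toAdd_one, ZMod.val_zero, pow_zero, one_mul]

lemma twist_ofAdd_one_one : twist hi (ofAdd 1, 1) = (ofAdd 1, r i) := by
  rw [twist_apply, map_one (invertRotations m), mul_one]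
  exact congr_arg _ (pow_one _)

lemma twist_twist (p : Multiplicative (ZMod 2) × DihedralGroup m) : twist hi (twist hi p) = p := by
  obtain ⟨c, x⟩ := p
  simp only [twist_apply, map_mul, map_pow, invertRotations_r_of_add_self_eq_zero hi,
    invertRotations_invertRotations, ← mul_assoc, ← pow_add, ← two_mul, pow_mul,
    r_sq_of_add_self_eq_zero hi, one_pow, one_mul]

def twistAut : MulAut (Multiplicative (ZMod 2) × DihedralGroup m) :=
  (twist hi).toMulEquiv (twist hi) (MonoidHom.ext (twist_twist hi)) (MonoidHom.ext (twist_twist hi))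

@[simp] lemma twistAut_apply (p : Multiplicative (ZMod 2) × DihedralGroup m) :
    twistAut hi p = twist hi p := rfl

lemma twistAut_sq : twistAut hi ^ 2 = 1 := MulEquiv.ext (twist_twist hi)

def twistAction : Multiplicative (ZMod 2) →* MulAut (Multiplicative (ZMod 2) × DihedralGroup m) :=
  zmodPowHom (twistAut hi) (twistAut_sq hi)

lemma twistAction_ofAdd_one : twistAction hi (ofAdd 1) = twistAut hi :=
  zmodPowHom_ofAdd_one (twistAut_sq hi)

end Twist

namespace NilGroup

open SemidirectProduct

section Target

open DihedralGroup

variable {n : ℕ}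

def centralIndex (n : ℕ) : ZMod (2 ^ (n - 3)) := (2 ^ (n - 4) : ℕ)

lemma centralIndex_add_self (hn : 4 ≤ n) : centralIndex n + centralIndex n = 0 := by
  rw [centralIndex, ← Nat.cast_add, ← two_mul, ← pow_succ', show n - 4 + 1 = n - 3 by omega,
    ZMod.natCast_self]

lemma centralIndex_val (hn : 4 ≤ n) : (centralIndex n).val = 2 ^ (n - 4) :=
  ZMod.val_natCast_of_lt (Nat.pow_lt_pow_right one_lt_two (by omega))

variable (n) in
abbrev Target (hn : 4 ≤ n) :=
  (Multiplicative (ZMod 2) × DihedralGroup (2 ^ (n - 3))) ⋊[twistAction (centralIndex_add_self hn)]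
    Multiplicative (ZMod 2)

variable (hn : 4 ≤ n)

lemma inr_mul_inl_mul_inr (p : Multiplicative (ZMod 2) × DihedralGroup (2 ^ (n - 3))) :
    (inr (ofAdd 1) * inl p * inr (ofAdd 1) : Target n hn) =
      inl (twistAut (centralIndex_add_self hn) p) := by
  have hinv : (ofAdd 1 : Multiplicative (ZMod 2))⁻¹ = ofAdd 1 := by decide
  rw [← twistAction_ofAdd_one, inl_aut, hinv]

lemma rels_map_eq_one : ∀ w ∈ nilRels n,
    FreeGroup.lift (![inr (ofAdd 1), inl (ofAdd 1, 1), inl (1, r 1), inl (1, sr 0)] :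
      Fin 4 → Target n hn) w = 1 := by
  intro w hw
  simp only [nilRels, Set.mem_insert_iff, Set.mem_singleton_iff] at hw
  rcases hw with rfl | rfl | rfl | rfl | rfl | rfl | rfl | rfl | rfl | rfl <;>
    simp only [map_mul, map_pow, map_inv, FreeGroup.lift_apply_of, Matrix.cons_val_zero,
      Matrix.cons_val_one, Matrix.cons_val] <;>
    simp only [inr_mul_inl_mul_inr, ← map_mul, ← map_pow, ← map_inv,
      map_eq_one_iff _ inl_injective, map_eq_one_iff _ inr_injective] <;>
    simp [Prod.ext_iff, sq, centralIndex, twist_one_mk, twist_ofAdd_one_one]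
  all_goals decide

end Target

section Presentation

variable (n : ℕ)

abbrev a : PresentedGroup (nilRels n) := .of 0
abbrev b : PresentedGroup (nilRels n) := .of 1
abbrev r : PresentedGroup (nilRels n) := .of 2
abbrev s : PresentedGroup (nilRels n) := .of 3

lemma r_pow : r n ^ 2 ^ (n - 3) = 1 := PresentedGroup.one_of_mem (by simp [nilRels])

lemma s_mul_s : s n * s n = 1 := by
  rw [← sq]; exact PresentedGroup.one_of_mem (by simp [nilRels])

lemma a_sq : a n ^ 2 = 1 := PresentedGroup.one_of_mem (by simp [nilRels])

lemma b_sq : b n ^ 2 = 1 := PresentedGroup.one_of_mem (by simp [nilRels])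

lemma s_mul_r_mul_s : s n * r n * s n = (r n)⁻¹ := by
  have h : (s n * r n) ^ 2 = 1 := PresentedGroup.one_of_mem (by simp [nilRels])
  rwa [sq, ← mul_assoc, mul_eq_one_iff_eq_inv] at h

lemma commute_s_b : Commute (s n) (b n) :=
  commutatorElement_eq_one_iff_commute.mp (PresentedGroup.one_of_mem (by simp [nilRels]))

lemma commute_r_b : Commute (r n) (b n) :=
  commutatorElement_eq_one_iff_commute.mp (PresentedGroup.one_of_mem (by simp [nilRels]))

lemma a_mul_r_mul_a : a n * r n * a n = (r n)⁻¹ :=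
  mul_eq_one_iff_eq_inv.mp (PresentedGroup.one_of_mem (by simp [nilRels]))

lemma a_mul_s_mul_a : a n * s n * a n = s n * r n :=
  mul_inv_eq_one.mp (PresentedGroup.one_of_mem (by simp [nilRels]))

lemma a_mul_b_mul_a : a n * b n * a n = b n * r n ^ 2 ^ (n - 4) :=
  mul_inv_eq_one.mp (PresentedGroup.one_of_mem (by simp [nilRels]))

def dihedralHom : DihedralGroup (2 ^ (n - 3)) →* PresentedGroup (nilRels n) :=
  DihedralGroup.lift (r_pow n) (s_mul_s n) (s_mul_r_mul_s n)

lemma commute_b_dihedralHom (x : DihedralGroup (2 ^ (n - 3))) :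
    Commute (b n) (dihedralHom n x) := by
  rcases x with i | i
  · exact (commute_r_b n).symm.pow_right _
  · exact (commute_s_b n).symm.mul_right ((commute_r_b n).symm.pow_right _)

def baseHom : Multiplicative (ZMod 2) × DihedralGroup (2 ^ (n - 3)) →* PresentedGroup (nilRels n) :=
  (zmodPowHom (b n) (b_sq n)).noncommCoprod (dihedralHom n)
    fun _ x => (commute_b_dihedralHom n x).pow_left _

@[simp] lemma baseHom_apply (p : Multiplicative (ZMod 2) × DihedralGroup (2 ^ (n - 3))) :
    baseHom n p = b n ^ (toAdd p.1).val * dihedralHom n p.2 := rfl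

end Presentation

variable {n : ℕ} (hn : 4 ≤ n)

lemma baseHom_comp_twistAction (g : Multiplicative (ZMod 2)) :
    (baseHom n).comp (twistAction (centralIndex_add_self hn) g).toMonoidHom =
      (MulAut.conj (zmodPowHom (a n) (a_sq n) g)).toMonoidHom.comp (baseHom n) := by
  obtain rfl | rfl : g = 1 ∨ g = ofAdd 1 := by revert g; decide
  · simp [MonoidHom.ext_iff]
  rw [twistAction_ofAdd_one, zmodPowHom_ofAdd_one]
  have ha : (a n)⁻¹ = a n := inv_eq_of_mul_eq_one_right ((sq _).symm.trans (a_sq n))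
  refine MonoidHom.prod_ext (MonoidHom.ext_zmod ?_) (DihedralGroup.hom_ext ?_ ?_) <;>
    simp only [MonoidHom.comp_apply, MulEquiv.coe_toMonoidHom, MulAut.conj_apply, ha,
      MonoidHom.inl_apply, MonoidHom.inr_apply] <;>
    simp [twist_one_mk, twist_ofAdd_one_one, dihedralHom, pow_val_neg (r_pow n),
      pow_val_one (r_pow n), pow_val_one (b_sq n), centralIndex_val hn, a_mul_r_mul_a,
      a_mul_s_mul_a, a_mul_b_mul_a]

def toTarget : PresentedGroup (nilRels n) →* Target n hn :=
  PresentedGroup.toGroup (rels_map_eq_one hn)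

@[simp] lemma toTarget_a : toTarget hn (a n) = inr (ofAdd 1) := PresentedGroup.toGroup.of _
@[simp] lemma toTarget_b : toTarget hn (b n) = inl (ofAdd 1, 1) := PresentedGroup.toGroup.of _
@[simp] lemma toTarget_r : toTarget hn (r n) = inl (1, .r 1) := PresentedGroup.toGroup.of _
@[simp] lemma toTarget_s : toTarget hn (s n) = inl (1, .sr 0) := PresentedGroup.toGroup.of _

def ofTarget : Target n hn →* PresentedGroup (nilRels n) :=
  SemidirectProduct.lift (baseHom n) (zmodPowHom (a n) (a_sq n)) (baseHom_comp_twistAction hn)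

lemma ofTarget_comp_toTarget : (ofTarget hn).comp (toTarget hn) = .id _ := by
  refine PresentedGroup.ext fun x => ?_
  fin_cases x <;>
    simp [ofTarget, dihedralHom, pow_val_one (a_sq n), pow_val_one (b_sq n), pow_val_one (r_pow n)]

lemma toTarget_comp_ofTarget : (toTarget hn).comp (ofTarget hn) = .id _ := by
  refine SemidirectProduct.hom_ext
    (MonoidHom.prod_ext (MonoidHom.ext_zmod ?_) (DihedralGroup.hom_ext ?_ ?_))
    (MonoidHom.ext_zmod ?_) <;>
    simp [ofTarget, dihedralHom, pow_val_one (a_sq n), pow_val_one (b_sq n), pow_val_one (r_pow n)]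

def mulEquivTarget : PresentedGroup (nilRels n) ≃* Target n hn :=
  (toTarget hn).toMulEquiv (ofTarget hn) (ofTarget_comp_toTarget hn) (toTarget_comp_ofTarget hn)

lemma card_target : Nat.card (Target n hn) = 2 ^ n := by
  have h : 2 ^ n = 2 ^ (n - 3) * 2 ^ 3 := by rw [← pow_add, Nat.sub_add_cancel (by omega)]
  rw [Nat.card_congr SemidirectProduct.equivProd, Nat.card_prod, Nat.card_prod,
    Nat.card_congr Multiplicative.toAdd, Nat.card_zmod, DihedralGroup.nat_card, h]
  ring

end NilGroup

/-- For n ≥ 5 the group with the above presentation is a nilpotent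
2-group of order 2^n, isomorphic to a semidirect product (C₂ × D_{2^{n-3}}) ⋊ C₂. -/
theorem nil_group_structure (n : ℕ) (hn : 5 ≤ n) :
    Nat.card (PresentedGroup (nilRels n)) = 2 ^ n ∧
    Group.IsNilpotent (PresentedGroup (nilRels n)) ∧
    IsPGroup 2 (PresentedGroup (nilRels n)) ∧
    ∃ φ : Multiplicative (ZMod 2) →*
        MulAut (Multiplicative (ZMod 2) × DihedralGroup (2 ^ (n - 3))),
      Nonempty (PresentedGroup (nilRels n) ≃*
        (Multiplicative (ZMod 2) × DihedralGroup (2 ^ (n - 3))) ⋊[φ]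
          Multiplicative (ZMod 2)) := by
  have hn4 : 4 ≤ n := by omega
  have hcard : Nat.card (PresentedGroup (nilRels n)) = 2 ^ n :=
    (Nat.card_congr (NilGroup.mulEquivTarget hn4).toEquiv).trans (NilGroup.card_target hn4)
  have : Finite (PresentedGroup (nilRels n)) := Nat.finite_of_card_ne_zero (by simp [hcard])
  have : Fact (Nat.Prime 2) := ⟨Nat.prime_two⟩
  have hp : IsPGroup 2 (PresentedGroup (nilRels n)) := IsPGroup.of_card hcard
  exact ⟨hcard, hp.isNilpotent, hp, _, ⟨NilGroup.mulEquivTarget hn4⟩⟩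
end

section
/- Let n ≥ 5 and let G = ⟨a,b,r,s : r^{2^{n-3}} = s^2 = (sr)^2 = a^2 = b^2 = 1, [s,b]=[r,b]=1, ara = r^{-1}, asa = sr, aba = br^{2^{n-4}}⟩ of order 2^n. Then the map sending (γ_1, γ_2, γ_3, γ_4) ↦ (s, bs, a, ab) extends to a surjective homomorphism from the group ⟨γ_1,γ_2,γ_3,γ_4 : γ_1^2 = γ_2^2 = γ_3^2 = γ_4^4 = γ_1γ_2γ_3γ_4 = 1⟩ onto G; i.e., s, bs, a have order 2, ab has order 4, s·bs·a·ab = 1, and {s, bs, a, ab} generates G. -/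
/-- Relators of the Fuchsian group of signature (0; 2,2,2,4):
γ₁² = γ₂² = γ₃² = γ₄⁴ = γ₁γ₂γ₃γ₄ = 1. -/
def quadRels : Set (FreeGroup (Fin 4)) :=
  {FreeGroup.of (0 : Fin 4) ^ 2, FreeGroup.of (1 : Fin 4) ^ 2,
    FreeGroup.of (2 : Fin 4) ^ 2, FreeGroup.of (3 : Fin 4) ^ 4,
    FreeGroup.of (0 : Fin 4) * FreeGroup.of (1 : Fin 4) *
      FreeGroup.of (2 : Fin 4) * FreeGroup.of (3 : Fin 4)}

/-!
The defining relations already give `s² = (bs)² = a² = 1`, `(ab)² = aba·b = r^(2^(n-4))`, hence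
`(ab)⁴ = r^(2^(n-3)) = 1`, and `s·bs·a·ab = 1`; since `b = bs·s` and `r = s·(asa)`, the elements
`s, bs, a, ab` generate `G`, so `γᵢ ↦ s, bs, a, ab` is an epimorphism.
The orders are exact because `s = 1`, `a = 1` or `bs = 1` would each force `r^(2^(n-4)) = 1`
(for `bs = 1`: then `b = s`, so `r` commutes with `s` and `r² = (sr)² = 1`). Finally
`r^(2^(n-4)) ≠ 1`, as the permutations `x ↦ -1 - x`, `x ↦ (1 + 2^(n-3)) x`, `x ↦ x + 2`, `x ↦ -x`
of `ℤ/2^(n-2)` satisfy the relations of `a, b, r, s`, and there `r^(2^(n-4))` is translation by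
`2^(n-3)`.
-/

structure NilRelations {H : Type*} [Group H] (n : ℕ) (a b r s : H) : Prop where
  r_pow : r ^ 2 ^ (n - 3) = 1
  s_sq : s ^ 2 = 1
  sr_sq : (s * r) ^ 2 = 1
  a_sq : a ^ 2 = 1
  b_sq : b ^ 2 = 1
  commute_s_b : Commute s b
  commute_r_b : Commute r b
  ara : a * r * a = r⁻¹
  asa : a * s * a = s * r
  aba : a * b * a = b * r ^ 2 ^ (n - 4)

theorem lift_nilRels_eq_one_iff {H : Type*} [Group H] (n : ℕ) (f : Fin 4 → H) :
    (∀ w ∈ nilRels n, FreeGroup.lift f w = 1) ↔ NilRelations n (f 0) (f 1) (f 2) (f 3) := by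
  simp only [nilRels, Set.mem_insert_iff, Set.mem_singleton_iff, forall_eq_or_imp, forall_eq,
    map_mul, map_pow, map_inv, FreeGroup.lift_apply_of]
  simp only [← commutatorElement_def, commutatorElement_eq_one_iff_commute,
    mul_eq_one_iff_eq_inv, inv_inv]
  constructor <;> rintro ⟨h1, h2, h3, h4, h5, h6, h7, h8, h9, h10⟩ <;>
    exact ⟨h1, h2, h3, h4, h5, h6, h7, h8, h9, h10⟩

namespace NilRelations

variable {H : Type*} [Group H] {n : ℕ} {a b r s : H}

theorem bs_sq (h : NilRelations n a b r s) : (b * s) ^ 2 = 1 := by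
  rw [h.commute_s_b.symm.mul_pow, h.b_sq, h.s_sq, one_mul]

theorem ab_sq (h : NilRelations n a b r s) : (a * b) ^ 2 = r ^ 2 ^ (n - 4) := by
  have hb : b * b = 1 := by rw [← pow_two, h.b_sq]
  calc (a * b) ^ 2 = a * b * a * b := by rw [pow_two, ← mul_assoc]
    _ = b * (r ^ 2 ^ (n - 4) * b) := by rw [h.aba, mul_assoc]
    _ = r ^ 2 ^ (n - 4) := by rw [(h.commute_r_b.pow_left _).eq, ← mul_assoc, hb, one_mul]

theorem ab_pow_four (h : NilRelations n a b r s) (hn : 4 ≤ n) : (a * b) ^ 4 = 1 := by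
  rw [show 4 = 2 * 2 from rfl, pow_mul, h.ab_sq, ← pow_mul, ← pow_succ,
    show n - 4 + 1 = n - 3 by omega, h.r_pow]

theorem s_mul_bs_mul_a_mul_ab (h : NilRelations n a b r s) : s * (b * s) * a * (a * b) = 1 := by
  calc s * (b * s) * a * (a * b) = s * b * s * a ^ 2 * b := by simp only [pow_two, mul_assoc]
    _ = (b * s) ^ 2 := by
      rw [h.a_sq, mul_one, pow_two, mul_assoc, mul_assoc, ← mul_assoc s, h.commute_s_b.eq,
        mul_assoc]
    _ = 1 := h.bs_sq

theorem closure_le (h : NilRelations n a b r s) :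
    Subgroup.closure {a, b, r, s} ≤ Subgroup.closure {s, b * s, a, a * b} := by
  have hs : s ∈ Subgroup.closure {s, b * s, a, a * b} := Subgroup.subset_closure (by simp)
  have hbs : b * s ∈ Subgroup.closure {s, b * s, a, a * b} := Subgroup.subset_closure (by simp)
  have ha : a ∈ Subgroup.closure {s, b * s, a, a * b} := Subgroup.subset_closure (by simp)
  simp only [Subgroup.closure_le, Set.insert_subset_iff, Set.singleton_subset_iff, SetLike.mem_coe]
  have hb := mul_mem hbs hs
  have hr := mul_mem hs (mul_mem (mul_mem ha hs) ha)
  rw [mul_assoc, ← pow_two, h.s_sq, mul_one] at hb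
  rw [h.asa, ← mul_assoc, ← pow_two, h.s_sq, one_mul] at hr
  exact ⟨ha, hb, hr, hs⟩

theorem s_ne_one (h : NilRelations n a b r s) (hr : r ^ 2 ^ (n - 4) ≠ 1) : s ≠ 1 := by
  rintro rfl
  have : r = 1 := by simpa [← pow_two, h.a_sq] using h.asa.symm
  exact hr (by rw [this, one_pow])

theorem a_ne_one (h : NilRelations n a b r s) (hr : r ^ 2 ^ (n - 4) ≠ 1) : a ≠ 1 := by
  rintro rfl
  have : r = 1 := by simpa using h.asa
  exact hr (by rw [this, one_pow])

theorem bs_ne_one (h : NilRelations n a b r s) (hn : 5 ≤ n) (hr : r ^ 2 ^ (n - 4) ≠ 1) :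
    b * s ≠ 1 := by
  intro hbs
  have hb : b = s := by
    rw [mul_eq_one_iff_eq_inv.mp hbs, inv_eq_of_mul_eq_one_left (by rw [← pow_two, h.s_sq])]
  have hr2 : r ^ 2 = 1 := by
    rw [← h.sr_sq, (hb ▸ h.commute_r_b : Commute r s).symm.mul_pow, h.s_sq, one_mul]
  apply hr
  rw [show n - 4 = n - 5 + 1 by omega, pow_succ', pow_mul, hr2, one_pow]

theorem orderOf_s (h : NilRelations n a b r s) (hr : r ^ 2 ^ (n - 4) ≠ 1) : orderOf s = 2 :=
  orderOf_eq_prime h.s_sq (h.s_ne_one hr)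

theorem orderOf_a (h : NilRelations n a b r s) (hr : r ^ 2 ^ (n - 4) ≠ 1) : orderOf a = 2 :=
  orderOf_eq_prime h.a_sq (h.a_ne_one hr)

theorem orderOf_bs (h : NilRelations n a b r s) (hn : 5 ≤ n) (hr : r ^ 2 ^ (n - 4) ≠ 1) :
    orderOf (b * s) = 2 :=
  orderOf_eq_prime h.bs_sq (h.bs_ne_one hn hr)

theorem orderOf_ab (h : NilRelations n a b r s) (hn : 4 ≤ n) (hr : r ^ 2 ^ (n - 4) ≠ 1) :
    orderOf (a * b) = 4 :=
  orderOf_eq_prime_pow (p := 2) (n := 1) (by rwa [pow_one, h.ab_sq]) (h.ab_pow_four hn)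

end NilRelations

theorem Equiv.addRight_pow_eq_one_iff {A : Type*} [AddGroup A] (x : A) (p : ℕ) :
    Equiv.addRight x ^ p = 1 ↔ p • x = 0 := by
  rw [Equiv.nsmul_addRight]
  refine ⟨fun h => by simpa using DFunLike.congr_fun h 0, fun h => by rw [h, Equiv.addRight_zero]⟩

section AffineModel

variable {R : Type*} [CommRing R]

theorem isUnit_one_add_two_pow {n : ℕ} (hn : 4 ≤ n)
    (hR : (2 : R) ^ (n - 2) = 0) : IsUnit (1 + 2 ^ (n - 3) : R) := by
  obtain ⟨m, rfl⟩ := Nat.exists_eq_add_of_le' hn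
  simp only [show m + 4 - 2 = m + 2 by omega, show m + 4 - 3 = m + 1 by omega] at hR ⊢
  exact IsUnit.of_mul_eq_one (1 + 2 ^ (m + 1)) (by linear_combination (1 + 2 ^ m) * hR)

theorem nilRelations_affine {n : ℕ} (hn : 4 ≤ n) (hR : (2 : R) ^ (n - 2) = 0) (u : Rˣ)
    (hu : (u : R) = 1 + 2 ^ (n - 3)) :
    NilRelations n (Equiv.subLeft (-1)) u.mulLeft (Equiv.addRight 2) (Equiv.neg R) := by
  obtain ⟨m, rfl⟩ := Nat.exists_eq_add_of_le' hn
  have hn2 : m + 4 - 2 = m + 2 := by omega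
  have hn3 : m + 4 - 3 = m + 1 := by omega
  rw [hn2] at hR
  rw [hn3] at hu
  constructor <;> (try simp only [Commute, SemiconjBy]) <;> ext x <;>
    simp only [hn3, Nat.add_sub_cancel, Equiv.Perm.mul_apply, Equiv.nsmul_addRight,
      Equiv.coe_addRight, Equiv.subLeft_apply, Equiv.neg_apply, Units.mulLeft_apply, Equiv.Perm.one_apply, Equiv.Perm.inv_def,
      Equiv.addRight_symm, hu, pow_two, nsmul_eq_mul, Nat.cast_pow, Nat.cast_ofNat]
  case r_pow => linear_combination hR
  case b_sq => linear_combination (1 + 2 ^ m) * x * hR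
  case commute_r_b => linear_combination -hR
  case aba => linear_combination -2 ^ m * hR
  all_goals ring

end AffineModel

theorem nilRelations_of (n : ℕ) :
    NilRelations n (PresentedGroup.of 0 : PresentedGroup (nilRels n)) (PresentedGroup.of 1)
      (PresentedGroup.of 2) (PresentedGroup.of 3) := by
  refine (lift_nilRels_eq_one_iff n PresentedGroup.of).1 fun w hw => ?_
  rw [show FreeGroup.lift PresentedGroup.of = PresentedGroup.mk (nilRels n) from
    FreeGroup.ext_hom _ _ fun _ => FreeGroup.lift_apply_of]
  exact PresentedGroup.one_of_mem hw

theorem nilRels_of_two_pow_ne_one {n : ℕ} (hn : 4 ≤ n) :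
    (PresentedGroup.of 2 : PresentedGroup (nilRels n)) ^ 2 ^ (n - 4) ≠ 1 := by
  have hR : (2 : ZMod (2 ^ (n - 2))) ^ (n - 2) = 0 := by
    exact_mod_cast ZMod.natCast_self (2 ^ (n - 2))
  obtain ⟨u, hu⟩ := isUnit_one_add_two_pow hn hR
  have hmodel := (lift_nilRels_eq_one_iff n
    ![Equiv.subLeft (-1), u.mulLeft, Equiv.addRight 2, Equiv.neg _]).2
    (nilRelations_affine hn hR u hu)
  refine ne_one_of_map (f := PresentedGroup.toGroup hmodel) ?_
  rw [map_pow, PresentedGroup.toGroup.of]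
  show ¬ Equiv.addRight _ ^ _ = 1
  rw [Equiv.addRight_pow_eq_one_iff, nsmul_eq_mul, ← Nat.cast_two (R := ZMod _), ← Nat.cast_mul,
    ← pow_succ, show n - 4 + 1 = n - 3 by omega, ZMod.natCast_eq_zero_iff,
    Nat.pow_dvd_pow_iff_le_right (by norm_num)]
  omega

theorem closure_nilRels_gens_eq_top (n : ℕ) :
    letI G := PresentedGroup (nilRels n)
    Subgroup.closure {(PresentedGroup.of 3 : G), PresentedGroup.of 1 * PresentedGroup.of 3,
      PresentedGroup.of 0, PresentedGroup.of 0 * PresentedGroup.of 1} = ⊤ := by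
  rw [eq_top_iff, ← PresentedGroup.closure_range_of]
  refine le_trans (Subgroup.closure_mono ?_) (nilRelations_of n).closure_le
  rintro _ ⟨i, rfl⟩
  fin_cases i <;> simp

theorem exists_surjective_of_quadRels {H : Type*} [Group H] {x₁ x₂ x₃ x₄ : H}
    (h₁ : x₁ ^ 2 = 1) (h₂ : x₂ ^ 2 = 1) (h₃ : x₃ ^ 2 = 1) (h₄ : x₄ ^ 4 = 1)
    (hprod : x₁ * x₂ * x₃ * x₄ = 1) (hgen : Subgroup.closure {x₁, x₂, x₃, x₄} = ⊤) :
    ∃ f : PresentedGroup quadRels →* H, Function.Surjective f ∧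
      f (PresentedGroup.of 0) = x₁ ∧ f (PresentedGroup.of 1) = x₂ ∧
      f (PresentedGroup.of 2) = x₃ ∧ f (PresentedGroup.of 3) = x₄ := by
  have hrels : ∀ w ∈ quadRels, FreeGroup.lift ![x₁, x₂, x₃, x₄] w = 1 := by
    simp only [quadRels, Set.mem_insert_iff, Set.mem_singleton_iff, forall_eq_or_imp, forall_eq,
      map_mul, map_pow, FreeGroup.lift_apply_of]
    exact ⟨h₁, h₂, h₃, h₄, hprod⟩
  set f := PresentedGroup.toGroup hrels
  have hf : ∀ i, f (PresentedGroup.of i) = ![x₁, x₂, x₃, x₄] i :=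
    fun _ => PresentedGroup.toGroup.of _
  refine ⟨f, ?_, hf 0, hf 1, hf 2, hf 3⟩
  rw [← MonoidHom.range_eq_top, eq_top_iff, ← hgen, Subgroup.closure_le]
  simp only [Set.insert_subset_iff, Set.singleton_subset_iff, SetLike.mem_coe]
  exact ⟨⟨_, hf 0⟩, ⟨_, hf 1⟩, ⟨_, hf 2⟩, ⟨_, hf 3⟩⟩

/-- (γ₁,γ₂,γ₃,γ₄) ↦ (s, bs, a, ab) extends to a surjective homomorphism
from the (0;2,2,2,4)-presented group onto G: s, bs, a have order 2, ab has order 4,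
s·bs·a·ab = 1, and {s, bs, a, ab} generates G. -/
theorem surface_kernel_epimorphism (n : ℕ) (hn : 5 ≤ n) :
    letI G := PresentedGroup (nilRels n)
    let a : G := PresentedGroup.of 0
    let b : G := PresentedGroup.of 1
    let s : G := PresentedGroup.of 3
    orderOf s = 2 ∧ orderOf (b * s) = 2 ∧ orderOf a = 2 ∧ orderOf (a * b) = 4 ∧
      s * (b * s) * a * (a * b) = 1 ∧
      Subgroup.closure {s, b * s, a, a * b} = (⊤ : Subgroup G) ∧
      ∃ f : PresentedGroup quadRels →* G, Function.Surjective f ∧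
        f (PresentedGroup.of 0) = s ∧ f (PresentedGroup.of 1) = b * s ∧
        f (PresentedGroup.of 2) = a ∧ f (PresentedGroup.of 3) = a * b := by
  intro a b s
  have h := nilRelations_of n
  have hr := nilRels_of_two_pow_ne_one (n := n) (by omega)
  have hgen := closure_nilRels_gens_eq_top n
  refine ⟨h.orderOf_s hr, h.orderOf_bs hn hr, h.orderOf_a hr, h.orderOf_ab (by omega) hr,
    h.s_mul_bs_mul_a_mul_ab, hgen, ?_⟩
  exact exists_surjective_of_quadRels h.s_sq h.bs_sq h.a_sq (h.ab_pow_four (by omega))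
    h.s_mul_bs_mul_a_mul_ab hgen
end

section
/- Let p be an odd prime, n ≥ 3, r = p^{n-2}+1, and G = ⟨a,b : a^{p^{n-1}} = b^p = 1, bab^{-1} = a^r⟩. Consider the semidirect product G' = G ⋊ C_2 where the generator t of C_2 acts by tat = a^{-1}, tbt = b. Then G' cannot be generated by three involutions x_1, x_2, x_3 with x_1 x_2 x_3 of order 2p; indeed, every involution of G' \ G has the form t a^k for some k, and any subgroup generated by three such involutions together is proper in G'. -/
/-!
Every element of `G'` has the normal form `a ^ i * b ^ j * t ^ e`, since the generators have finite
order and `b`, `t` normalise `⟨a⟩`, with `t` commuting with `b`.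

Counting the exponent of `b` modulo `p` is a homomorphism `G' → ℤ/p` (every relator has `b`-exponent
sum `0` or `p`). As `p` is odd, it kills every involution, so three involutions generate a subgroup
of its kernel, which misses `b`. For an involution `a ^ i * b ^ j * t ^ e` it also gives `p ∣ j`,
so `b ^ j = 1`; lying outside `⟨a, b⟩` then forces `e` odd, and `a ^ i * t = t * a ^ (-i)`.
-/

/-- Relators of G' = G ⋊ C₂ = ⟨a, b, t : a^{p^{n-1}} = b^p = t² = 1,
bab⁻¹ = a^{p^{n-2}+1}, tat⁻¹ = a⁻¹, tbt⁻¹ = b⟩ (generators a, b, t at 0, 1, 2). -/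
def extRels (p n : ℕ) : Set (FreeGroup (Fin 3)) :=
  let a := FreeGroup.of (0 : Fin 3)
  let b := FreeGroup.of (1 : Fin 3)
  let t := FreeGroup.of (2 : Fin 3)
  {a ^ p ^ (n - 1), b ^ p, b * a * b⁻¹ * (a ^ (p ^ (n - 2) + 1))⁻¹,
    t ^ 2, t * a * t⁻¹ * a, t * b * t⁻¹ * b⁻¹}

section NormalForm

variable {G : Type*} [Group G] {a b t : G}

theorem mul_zpow_eq_zpow_mul_of_conj {c : G} (h : t * a * t⁻¹ = c) (i : ℤ) :
    t * a ^ i = c ^ i * t :=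
  SemiconjBy.zpow_right (mul_inv_eq_iff_eq_mul.mp h) i

theorem exists_eq_zpow_mul_pow_mul_pow {r : ℤ} (hgen : Submonoid.closure {a, b, t} = ⊤)
    (hba : b * a * b⁻¹ = a ^ r) (hta : t * a * t⁻¹ = a⁻¹) (htb : t * b * t⁻¹ = b) (g : G) :
    ∃ (i : ℤ) (j e : ℕ), g = a ^ i * b ^ j * t ^ e := by
  have hba_zpow (i : ℤ) : b * a ^ i = a ^ (r * i) * b := by
    rw [zpow_mul, mul_zpow_eq_zpow_mul_of_conj hba]
  have hta_zpow (i : ℤ) : t * a ^ i = a ^ (-i) * t := by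
    rw [← inv_zpow', mul_zpow_eq_zpow_mul_of_conj hta]
  have htb_pow (j : ℕ) : t * b ^ j = b ^ j * t :=
    (Commute.pow_right (mul_inv_eq_iff_eq_mul.mp htb) j :)
  induction g using Submonoid.induction_of_closure_eq_top_left hgen with
  | one => exact ⟨0, 0, 0, by simp⟩
  | mul_left x hx g ih =>
    obtain ⟨i, j, e, rfl⟩ := ih
    rcases hx with rfl | rfl | rfl
    · exact ⟨1 + i, j, e, by simp only [zpow_one_add, mul_assoc]⟩
    · exact ⟨r * i, j + 1, e, by simp only [← mul_assoc, hba_zpow, pow_succ']⟩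
    · refine ⟨-i, j, e + 1, ?_⟩
      simp only [← mul_assoc, hta_zpow]
      simp only [mul_assoc, htb_pow, pow_succ']

end NormalForm

theorem MonoidHom.map_eq_one_of_sq_eq_one {G H : Type*} [Group G] [Group H]
    (hH : Odd (Nat.card H)) (f : G →* H) {x : G} (hx : x ^ 2 = 1) : f x = 1 := by
  have h2 : orderOf (f x) ∣ 2 := orderOf_dvd_of_pow_eq_one (by rw [← map_pow, hx, map_one])
  exact orderOf_eq_one_iff.mp
    (Nat.eq_one_of_dvd_coprimes (Nat.coprime_two_left.mpr hH) h2 (orderOf_dvd_natCard _))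

namespace ExtRels

variable {p n : ℕ}

local notation "Γ" => PresentedGroup (extRels p n)

theorem a_pow_eq_one : (.of 0 : Γ) ^ p ^ (n - 1) = 1 := by
  have h := PresentedGroup.one_of_mem (rels := extRels p n) (x := .of 0 ^ p ^ (n - 1))
    (by simp [extRels])
  rwa [map_pow] at h

theorem b_pow_eq_one : (.of 1 : Γ) ^ p = 1 := by
  have h := PresentedGroup.one_of_mem (rels := extRels p n) (x := .of 1 ^ p) (by simp [extRels])
  rwa [map_pow] at h

theorem t_sq_eq_one : (.of 2 : Γ) ^ 2 = 1 := by
  have h := PresentedGroup.one_of_mem (rels := extRels p n) (x := .of 2 ^ 2) (by simp [extRels])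
  rwa [map_pow] at h

theorem b_mul_a_mul_b_inv : (.of 1 : Γ) * .of 0 * (.of 1)⁻¹ = .of 0 ^ (p ^ (n - 2) + 1) := by
  have h := PresentedGroup.one_of_mem (rels := extRels p n)
    (x := .of 1 * .of 0 * (.of 1)⁻¹ * (.of 0 ^ (p ^ (n - 2) + 1))⁻¹) (by simp [extRels])
  rw [map_mul, map_inv, map_pow] at h
  exact mul_inv_eq_one.mp h

theorem t_mul_a_mul_t_inv : (.of 2 : Γ) * .of 0 * (.of 2)⁻¹ = (.of 0)⁻¹ := by
  have h := PresentedGroup.one_of_mem (rels := extRels p n)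
    (x := .of 2 * .of 0 * (.of 2)⁻¹ * .of 0) (by simp [extRels])
  exact eq_inv_of_mul_eq_one_left h

theorem t_mul_b_mul_t_inv : (.of 2 : Γ) * .of 1 * (.of 2)⁻¹ = .of 1 := by
  have h := PresentedGroup.one_of_mem (rels := extRels p n)
    (x := .of 2 * .of 1 * (.of 2)⁻¹ * (.of 1)⁻¹) (by simp [extRels])
  exact mul_inv_eq_one.mp h

theorem isOfFinOrder_a (hp : 0 < p) : IsOfFinOrder (.of 0 : Γ) :=
  isOfFinOrder_iff_pow_eq_one.mpr ⟨_, pow_pos hp _, a_pow_eq_one⟩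

theorem submonoid_closure_eq_top (hp : 0 < p) :
    Submonoid.closure {(.of 0 : Γ), .of 1, .of 2} = ⊤ := by
  have hrange : Set.range (.of : Fin 3 → Γ) = {.of 0, .of 1, .of 2} := by
    ext x
    simp [Fin.exists_fin_succ, eq_comm]
  have hfin : ∀ x ∈ Set.range (.of : Fin 3 → Γ), IsOfFinOrder x := by
    rw [hrange]
    rintro _ (rfl | rfl | rfl)
    · exact isOfFinOrder_a hp
    · exact isOfFinOrder_iff_pow_eq_one.mpr ⟨p, hp, b_pow_eq_one⟩
    · exact isOfFinOrder_iff_pow_eq_one.mpr ⟨2, two_pos, t_sq_eq_one⟩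
  rw [← hrange, ← Subgroup.closure_toSubmonoid_of_isOfFinOrder hfin,
    PresentedGroup.closure_range_of, Subgroup.top_toSubmonoid]

variable (p n) in
def bExponentSum : Γ →* Multiplicative (ZMod p) :=
  PresentedGroup.toGroup (f := Pi.mulSingle 1 (.ofAdd 1)) <| by
    rintro r (rfl | rfl | rfl | rfl | rfl | rfl) <;> simp [← ofAdd_nsmul]

theorem bExponentSum_apply (i : ℤ) (j e : ℕ) :
    bExponentSum p n (.of 0 ^ i * .of 1 ^ j * .of 2 ^ e) = .ofAdd (j : ZMod p) := by
  simp [bExponentSum, PresentedGroup.toGroup.of, ← ofAdd_nsmul]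

theorem bExponentSum_of_one : bExponentSum p n (.of 1) = .ofAdd 1 := by
  simp [bExponentSum, PresentedGroup.toGroup.of]

theorem bExponentSum_eq_one_of_sq_eq_one (hodd : Odd p) {x : Γ} (hx : x ^ 2 = 1) :
    bExponentSum p n x = 1 :=
  (bExponentSum p n).map_eq_one_of_sq_eq_one
    (by rwa [Nat.card_congr Multiplicative.toAdd, Nat.card_zmod]) hx

theorem closure_ne_top_of_sq_eq_one (hp : p ≠ 1) (hodd : Odd p) {S : Set Γ}
    (hS : ∀ x ∈ S, x ^ 2 = 1) : Subgroup.closure S ≠ ⊤ := by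
  have hS_ker : Subgroup.closure S ≤ (bExponentSum p n).ker :=
    (Subgroup.closure_le _).mpr fun x hx => bExponentSum_eq_one_of_sq_eq_one hodd (hS x hx)
  intro htop
  have hb : bExponentSum p n (.of 1) = 1 := hS_ker (htop ▸ Subgroup.mem_top _)
  rw [bExponentSum_of_one, ofAdd_eq_one] at hb
  have : Nontrivial (ZMod p) := ZMod.nontrivial_iff.mpr hp
  exact one_ne_zero hb

theorem exists_eq_mul_pow_of_sq_eq_one (hodd : Odd p) {x : Γ} (hx : x ^ 2 = 1)
    (hxG : x ∉ Subgroup.closure {.of 0, .of 1}) : ∃ k : ℕ, x = .of 2 * .of 0 ^ k := by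
  obtain ⟨i, j, e, rfl⟩ := exists_eq_zpow_mul_pow_mul_pow (submonoid_closure_eq_top hodd.pos)
    (by rw [zpow_natCast]; exact b_mul_a_mul_b_inv) t_mul_a_mul_t_inv t_mul_b_mul_t_inv x
  have hj : (.of 1 : Γ) ^ j = 1 := by
    have h := bExponentSum_eq_one_of_sq_eq_one hodd hx
    rw [bExponentSum_apply, ofAdd_eq_one, ZMod.natCast_eq_zero_iff] at h
    obtain ⟨m, rfl⟩ := h
    rw [pow_mul, b_pow_eq_one, one_pow]
  rw [hj, mul_one] at hxG ⊢
  rcases Nat.even_or_odd e with ⟨m, rfl⟩ | ⟨m, rfl⟩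
  · rw [← two_mul, pow_mul, t_sq_eq_one, one_pow, mul_one] at hxG
    exact absurd (zpow_mem (Subgroup.subset_closure (Set.mem_insert _ _)) i) hxG
  · obtain ⟨k, hk : (.of 0 : Γ) ^ k = _⟩ :=
      ((isOfFinOrder_a hodd.pos).mem_powers_iff_mem_zpowers (y := .of 0 ^ (-i))).mpr ⟨-i, rfl⟩
    refine ⟨k, ?_⟩
    rw [pow_succ, pow_mul, t_sq_eq_one, one_pow, one_mul, hk,
      mul_zpow_eq_zpow_mul_of_conj t_mul_a_mul_t_inv, inv_zpow', neg_neg]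

end ExtRels

theorem no_extension_by_involutions_general (p n : ℕ) (hp : p.Prime) (hodd : Odd p) :
    letI G' := PresentedGroup (extRels p n)
    let a : G' := PresentedGroup.of 0
    let b : G' := PresentedGroup.of 1
    let t : G' := PresentedGroup.of 2
    (∀ x : G', orderOf x = 2 → x ∉ Subgroup.closure ({a, b} : Set G') →
      ∃ k : ℕ, x = t * a ^ k) ∧
    (∀ x₁ x₂ x₃ : G', orderOf x₁ = 2 → orderOf x₂ = 2 → orderOf x₃ = 2 →
      Subgroup.closure ({x₁, x₂, x₃} : Set G') ≠ ⊤) ∧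
    ¬ ∃ x₁ x₂ x₃ : G', orderOf x₁ = 2 ∧ orderOf x₂ = 2 ∧ orderOf x₃ = 2 ∧
        orderOf (x₁ * x₂ * x₃) = 2 * p ∧
        Subgroup.closure ({x₁, x₂, x₃} : Set G') = ⊤ := by
  intro a b t
  have sq_eq_one {x : PresentedGroup (extRels p n)} (hx : orderOf x = 2) : x ^ 2 = 1 :=
    hx ▸ pow_orderOf_eq_one x
  have closure_ne_top (x₁ x₂ x₃ : PresentedGroup (extRels p n)) (h₁ : orderOf x₁ = 2)
      (h₂ : orderOf x₂ = 2) (h₃ : orderOf x₃ = 2) : Subgroup.closure {x₁, x₂, x₃} ≠ ⊤ :=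
    ExtRels.closure_ne_top_of_sq_eq_one hp.ne_one hodd <| by
      rintro _ (rfl | rfl | rfl)
      exacts [sq_eq_one h₁, sq_eq_one h₂, sq_eq_one h₃]
  refine ⟨fun x hx hxG => ExtRels.exists_eq_mul_pow_of_sq_eq_one hodd (sq_eq_one hx) hxG,
    closure_ne_top, ?_⟩
  rintro ⟨x₁, x₂, x₃, h₁, h₂, h₃, -, htop⟩
  exact closure_ne_top x₁ x₂ x₃ h₁ h₂ h₃ htop

/-- In G' = G ⋊ C₂ (t inverting a, centralizing b), every involution
outside G = ⟨a, b⟩ has the form t·a^k, no three involutions generate G', and in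
particular G' is not generated by three involutions whose product has order 2p. -/
theorem no_extension_by_involutions (p n : ℕ) (hp : p.Prime) (hodd : Odd p)
    (hn : 3 ≤ n) :
    letI G' := PresentedGroup (extRels p n)
    let a : G' := PresentedGroup.of 0
    let b : G' := PresentedGroup.of 1
    let t : G' := PresentedGroup.of 2
    (∀ x : G', orderOf x = 2 → x ∉ Subgroup.closure ({a, b} : Set G') →
      ∃ k : ℕ, x = t * a ^ k) ∧
    (∀ x₁ x₂ x₃ : G', orderOf x₁ = 2 → orderOf x₂ = 2 → orderOf x₃ = 2 →
      Subgroup.closure ({x₁, x₂, x₃} : Set G') ≠ ⊤) ∧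
    ¬ ∃ x₁ x₂ x₃ : G', orderOf x₁ = 2 ∧ orderOf x₂ = 2 ∧ orderOf x₃ = 2 ∧
        orderOf (x₁ * x₂ * x₃) = 2 * p ∧
        Subgroup.closure ({x₁, x₂, x₃} : Set G') = ⊤ :=
  no_extension_by_involutions_general p n hp hodd
end

section
/- Suppose a finite group N of order N acts on a genus-g surface (g ≥ 2) with signature (h; m_1, …, m_l) such that all periods m_i are powers of a prime p ≥ 5, and 2(g-1) = N(2h - 2 + Σ(1 - 1/m_i)) with d = 3h - 3 + l = 1. Then N ≤ 2p(g-1)/(p-1), and equality holds if and only if the signature is (1; p). -/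
/-- One-dimensional case of the p ≥ 5 bound: if all periods are powers of
p ≥ 5, 3h - 3 + l = 1 and 2(g-1) = N(2h - 2 + Σ(1 - 1/m_i)), then N ≤ 2p(g-1)/(p-1),
with equality iff the signature is (1; p). -/
theorem p_group_dim_one (p N g h l : ℕ) (m : Fin l → ℕ)
    (hp : p.Prime) (hp5 : 5 ≤ p)
    (hN : 1 ≤ N) (hg : 2 ≤ g)
    (hmp : ∀ i, p ≤ m i) (hmpow : ∀ i, ∃ k : ℕ, m i = p ^ k)
    (hdim : 3 * (h : ℤ) - 3 + l = 1)
    (hRH : 2 * ((g : ℚ) - 1) = N * (2 * (h : ℚ) - 2 + ∑ i, (1 - 1 / (m i : ℚ)))) :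
    (N : ℚ) ≤ 2 * p * ((g : ℚ) - 1) / ((p : ℚ) - 1) ∧
      ((N : ℚ) = 2 * p * ((g : ℚ) - 1) / ((p : ℚ) - 1) ↔
        (h = 1 ∧ l = 1 ∧ ∀ i, m i = p)) := by
  have hpQ : (5:ℚ) ≤ (p:ℚ) := by exact_mod_cast hp5
  have hp1 : (0:ℚ) < (p:ℚ) - 1 := by linarith
  have hp0 : (0:ℚ) < (p:ℚ) := by linarith
  have hNQ : (1:ℚ) ≤ (N:ℚ) := by exact_mod_cast hN
  have hgQ : (2:ℚ) ≤ (g:ℚ) := by exact_mod_cast hg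
  have hcase : (h = 1 ∧ l = 1) ∨ (h = 0 ∧ l = 4) := by omega
  rcases hcase with ⟨hh, hl⟩ | ⟨hh, hl⟩
  · subst hh; subst hl
    have hM : (p:ℚ) ≤ (m 0 : ℚ) := by exact_mod_cast hmp 0
    have hM0 : (0:ℚ) < (m 0 : ℚ) := by linarith
    simp only [Fin.sum_univ_one] at hRH
    push_cast at hRH
    -- key : 2*(g-1)*M = N*(M-1)
    have key : 2*((g:ℚ)-1)*(m 0:ℚ) = (N:ℚ)*((m 0:ℚ)-1) := by
      field_simp at hRH
      linarith [hRH]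
    constructor
    · rw [le_div_iff₀ hp1]
      have hnn : (0:ℚ) ≤ (N:ℚ) * ((m 0:ℚ) - (p:ℚ)) := by
        apply mul_nonneg (by linarith) (by linarith)
      -- N*(p-1)*M ≤ 2*p*(g-1)*M = p*N*(M-1)
      have : (N:ℚ)*((p:ℚ)-1)*(m 0:ℚ) ≤ 2*(p:ℚ)*((g:ℚ)-1)*(m 0:ℚ) := by
        nlinarith [key]
      exact le_of_mul_le_mul_right (by linarith) hM0
    · constructor
      · intro heq
        have heq' : (N:ℚ)*((p:ℚ)-1) = 2*(p:ℚ)*((g:ℚ)-1) := by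
          field_simp at heq; linarith
        -- N*(p-1)*M = p*N*(M-1) → N*(M-p) = 0 → M = p
        have hMp : (m 0:ℚ) = (p:ℚ) := by nlinarith [key, heq']
        have hm0 : m 0 = p := by exact_mod_cast hMp
        exact ⟨rfl, rfl, fun i => by fin_cases i; exact hm0⟩
      · rintro ⟨-, -, hmi⟩
        have hm0 : (m 0 : ℚ) = (p:ℚ) := by exact_mod_cast congrArg Nat.cast (hmi 0)
        rw [hm0] at key
        rw [eq_div_iff (ne_of_gt hp1)]
        linarith
  · subst hh; subst hl
    have hstrict : (N:ℚ) < 2 * p * ((g:ℚ) - 1) / ((p:ℚ) - 1) := by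
      rw [lt_div_iff₀ hp1]
      simp only [Fin.sum_univ_four] at hRH
      push_cast at hRH
      have key : ∀ i : Fin 4, (N:ℚ) * ((p:ℚ) * (1 / (m i:ℚ))) ≤ (N:ℚ) := by
        intro i
        have hMi : (p:ℚ) ≤ (m i : ℚ) := by exact_mod_cast hmp i
        have hMi0 : (0:ℚ) < (m i : ℚ) := by linarith
        have h1 : 1 / (m i:ℚ) ≤ 1 / (p:ℚ) := by
          apply one_div_le_one_div_of_le hp0 hMi
        have h2 : (p:ℚ) * (1 / (m i:ℚ)) ≤ 1 := by
          calc (p:ℚ) * (1 / (m i:ℚ)) ≤ (p:ℚ) * (1 / (p:ℚ)) := by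
                exact mul_le_mul_of_nonneg_left h1 (le_of_lt hp0)
            _ = 1 := by field_simp
        nlinarith
      have e : 2*(p:ℚ)*((g:ℚ)-1) = (N:ℚ) * (2*(p:ℚ)) - (N:ℚ)*((p:ℚ)*(1/(m 0:ℚ)))
          - (N:ℚ)*((p:ℚ)*(1/(m 1:ℚ))) - (N:ℚ)*((p:ℚ)*(1/(m 2:ℚ)))
          - (N:ℚ)*((p:ℚ)*(1/(m 3:ℚ))) := by
        linear_combination (p:ℚ) * hRH
      have k0 := key 0; have k1 := key 1; have k2 := key 2; have k3 := key 3
      nlinarith [k0, k1, k2, k3]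
    refine ⟨le_of_lt hstrict, ?_, ?_⟩
    · intro heq; exact absurd heq (ne_of_lt hstrict)
    · rintro ⟨h1, -, -⟩; exact absurd h1 (by norm_num)
end
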